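/- arXiv:1811.01558 — 10 statements merged into one kernel-verified Lean document; each statement's English description precedes it below -/
import Mathlib

section
/- Fix T > 0, an initial point x₀ ∈ ℝ^d, a probability space (Ω, F, P), a measurable space Γ, an i.i.d. sequence (γ_k)_{k≥0} of Γ-valued random variables, and a measurable map h : ℝ^d × Γ × ℝ → ℝ^d. Assume there is a measurable function L : Γ → (0, ∞) such that |h(x, r, η)| ≤ L(r)(1 + |x|) for all x, r, η, and E[L(γ₀)^m] < ∞ for every integer m ≥ 1. For each learning rate η ∈ (0, min(1, T)) define the iterates x_{k+1} = x_k + η·h(x_k, γ_k, η). Then for every integer m ≥ 1 there exists a constant C (depending only on T, m, |x₀| and the moments of L(γ₀), but not on η or k) such that E|x_k|^m ≤ C for all η ∈ (0, min(1, T)) and all 0 ≤ k ≤ ⌊T/η⌋. -/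
/-!
Each step multiplies `1 + ‖x_k‖` by at most `1 + η L(γ_k)`, so `‖x_k‖ ^ m` is dominated
by `(1 + ‖x₀‖) ^ m ∏_{j<k} (1 + η L(γ_j)) ^ m`. Independence and identical distribution turn
the expectation of this product into `(E (1 + η L(γ₀)) ^ m) ^ k`, and convexity of `s ↦ s ^ m`
gives `E (1 + η L(γ₀)) ^ m ≤ 1 + η B` with `B = E (1 + L(γ₀)) ^ m`, finite by the moment
assumption. Since `k η ≤ T`, the bound `(1 + η B) ^ k ≤ exp (T B)` is uniform in `η` and `k`.
-/

open MeasureTheory ProbabilityTheory Finset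

theorem one_add_mul_pow_le {t a : ℝ} (ha : 0 ≤ a) (ht₀ : 0 ≤ t) (ht₁ : t ≤ 1) (m : ℕ) :
    (1 + t * a) ^ m ≤ 1 + t * ((1 + a) ^ m - 1) := by
  have h := (convexOn_pow m).2 (Set.mem_Ici.2 zero_le_one)
    (Set.mem_Ici.2 (by linarith : (0 : ℝ) ≤ 1 + a)) (sub_nonneg.2 ht₁) ht₀ (by ring)
  simp only [smul_eq_mul, one_pow, mul_one] at h
  rw [show 1 + t * a = 1 - t + t * (1 + a) by ring]
  linarith

theorem le_mul_prod_of_le_mul {u a : ℕ → ℝ} (ha : ∀ k, 0 ≤ a k)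
    (hu : ∀ k, u (k + 1) ≤ a k * u k) (k : ℕ) : u k ≤ u 0 * ∏ j ∈ range k, a j := by
  induction k with
  | zero => simp
  | succ k ih =>
    calc u (k + 1) ≤ a k * u k := hu k
      _ ≤ a k * (u 0 * ∏ j ∈ range k, a j) := mul_le_mul_of_nonneg_left ih (ha k)
      _ = u 0 * ∏ j ∈ range (k + 1), a j := by rw [prod_range_succ]; ring

section NormedGroup

variable {E : Type*} [SeminormedAddCommGroup E] {x : ℕ → E} {c : ℕ → ℝ}

theorem one_add_norm_le_prod_of_norm_sub_le
    (hstep : ∀ k, ‖x (k + 1) - x k‖ ≤ c k * (1 + ‖x k‖)) (k : ℕ) :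
    1 + ‖x k‖ ≤ (1 + ‖x 0‖) * ∏ j ∈ range k, (1 + c j) := by
  have hc : ∀ k, 0 ≤ c k := fun k =>
    nonneg_of_mul_nonneg_left ((norm_nonneg _).trans (hstep k)) (by positivity)
  refine le_mul_prod_of_le_mul (u := fun k => 1 + ‖x k‖) (fun k => by linarith [hc k])
    (fun k => ?_) k
  have := norm_le_norm_add_norm_sub' (x (k + 1)) (x k)
  nlinarith [hstep k]

theorem norm_pow_le_prod_of_norm_sub_le
    (hstep : ∀ k, ‖x (k + 1) - x k‖ ≤ c k * (1 + ‖x k‖)) (k m : ℕ) :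
    ‖x k‖ ^ m ≤ (1 + ‖x 0‖) ^ m * ∏ j ∈ range k, (1 + c j) ^ m := by
  rw [prod_pow, ← mul_pow]
  exact pow_le_pow_left₀ (norm_nonneg _)
    ((le_add_of_nonneg_left zero_le_one).trans (one_add_norm_le_prod_of_norm_sub_le hstep k)) m

end NormedGroup

theorem one_add_mul_pow_le_exp {B η T : ℝ} (hB : 0 ≤ B) (hη : 0 ≤ η) {k : ℕ}
    (hk : k * η ≤ T) : (1 + η * B) ^ k ≤ Real.exp (T * B) :=
  calc (1 + η * B) ^ k ≤ Real.exp (η * B) ^ k :=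
        pow_le_pow_left₀ (by positivity) (by linarith [Real.add_one_le_exp (η * B)]) k
    _ = Real.exp (k * η * B) := by rw [← Real.exp_nat_mul, mul_assoc]
    _ ≤ Real.exp (T * B) := Real.exp_le_exp.2 (mul_le_mul_of_nonneg_right hk hB)

namespace ProbabilityTheory

variable {Ω : Type*} [MeasurableSpace Ω] {P : Measure Ω}

theorem integrable_one_add_pow [IsFiniteMeasure P] {X : Ω → ℝ}
    (hX : ∀ m : ℕ, 1 ≤ m → Integrable (fun ω => X ω ^ m) P) (m : ℕ) :
    Integrable (fun ω => (1 + X ω) ^ m) P := by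
  simp_rw [add_comm (1 : ℝ), add_pow, one_pow, mul_one]
  refine integrable_finsetSum _ fun j _ => (?_ : Integrable _ P).mul_const _
  rcases j.eq_zero_or_pos with rfl | hj
  · simp
  · exact hX j hj

theorem iIndepFun.integrable_prod_range {g : ℕ → Ω → ℝ} (hind : iIndepFun g P)
    (hint : ∀ j, Integrable (g j) P) (k : ℕ) :
    Integrable (fun ω => ∏ j ∈ range k, g j ω) P := by
  have := hind.isProbabilityMeasure
  simp_rw [← prod_apply]
  induction k with
  | zero => simp
  | succ k ih =>
    rw [prod_range_succ]
    exact (hind.indepFun_prod_range_succ₀ (fun j => (hint j).aemeasurable) k).integrable_mul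
      ih (hint k)

theorem iIndepFun.integral_prod_range {g : ℕ → Ω → ℝ} (hind : iIndepFun g P)
    (hmeas : ∀ j, AEStronglyMeasurable (g j) P) (k : ℕ) :
    ∫ ω, ∏ j ∈ range k, g j ω ∂P = ∏ j ∈ range k, ∫ ω, g j ω ∂P := by
  have := (hind.precomp (g := ((↑) : range k → ℕ)) Subtype.val_injective)
    |>.integral_fun_prod_eq_prod_integral fun j => hmeas j
  rwa [prod_coe_sort (range k) (fun j => ∫ ω, g j ω ∂P),
    funext fun ω => prod_coe_sort (range k) (fun j => g j ω)] at this

theorem iIndepFun.integral_prod_range_eq_pow {g : ℕ → Ω → ℝ} (hind : iIndepFun g P)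
    (hident : ∀ j, IdentDistrib (g j) (g 0) P P) (k : ℕ) :
    ∫ ω, ∏ j ∈ range k, g j ω ∂P = (∫ ω, g 0 ω ∂P) ^ k := by
  rw [hind.integral_prod_range fun j => (hident j).aemeasurable_fst.aestronglyMeasurable,
    prod_congr rfl fun j _ => (hident j).integral_eq, prod_const, card_range]

theorem integral_one_add_mul_pow_le [IsProbabilityMeasure P] {Y : Ω → ℝ}
    (hY : ∀ ω, 0 ≤ Y ω) (hmeas : AEStronglyMeasurable Y P) {m : ℕ}
    (hint : Integrable (fun ω => (1 + Y ω) ^ m) P)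
    {t : ℝ} (ht₀ : 0 ≤ t) (ht₁ : t ≤ 1) :
    Integrable (fun ω => (1 + t * Y ω) ^ m) P ∧
      ∫ ω, (1 + t * Y ω) ^ m ∂P ≤ 1 + t * ∫ ω, (1 + Y ω) ^ m ∂P := by
  have hle : ∀ ω, (1 + t * Y ω) ^ m ≤ 1 + t * (1 + Y ω) ^ m := fun ω =>
    (one_add_mul_pow_le (hY ω) ht₀ ht₁ m).trans (by linarith)
  have hdom : Integrable (fun ω => 1 + t * (1 + Y ω) ^ m) P :=
    (integrable_const 1).add (hint.const_mul t)
  have hint' : Integrable (fun ω => (1 + t * Y ω) ^ m) P :=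
    hdom.mono' (by fun_prop) (ae_of_all _ fun ω => by
      rw [Real.norm_of_nonneg (by have := hY ω; positivity)]; exact hle ω)
  refine ⟨hint', (integral_mono hint' hdom hle).trans_eq ?_⟩
  rw [integral_add (integrable_const 1) (hint.const_mul t), integral_const_mul]
  simp

end ProbabilityTheory

theorem sga_uniform_moment_bound_general
    {d : ℕ} (T : ℝ) (x₀ : EuclideanSpace ℝ (Fin d))
    {Ω : Type*} [MeasurableSpace Ω] (P : Measure Ω) [IsProbabilityMeasure P]
    {Γ : Type*} [MeasurableSpace Γ]
    (γ : ℕ → Ω → Γ)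
    (hindep : iIndepFun γ P)
    (hident : ∀ k, IdentDistrib (γ k) (γ 0) P P)
    (h : EuclideanSpace ℝ (Fin d) → Γ → ℝ → EuclideanSpace ℝ (Fin d))
    (L : Γ → ℝ) (hLmeas : Measurable L)
    (hgrowth : ∀ (x : EuclideanSpace ℝ (Fin d)) (r : Γ) (η : ℝ),
      ‖h x r η‖ ≤ L r * (1 + ‖x‖))
    (hLmom : ∀ m : ℕ, 1 ≤ m → Integrable (fun ω => (L (γ 0 ω)) ^ m) P)
    (x : ℝ → ℕ → Ω → EuclideanSpace ℝ (Fin d))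
    (hx0 : ∀ η ω, x η 0 ω = x₀)
    (hrec : ∀ η k ω, x η (k + 1) ω = x η k ω + η • h (x η k ω) (γ k ω) η) :
    ∀ m : ℕ, 1 ≤ m → ∃ C : ℝ,
      ∀ η : ℝ, 0 < η → η < min 1 T →
        ∀ k : ℕ, k ≤ ⌊T / η⌋₊ → ∫ ω, ‖x η k ω‖ ^ m ∂P ≤ C := by
  intro m _
  have hL : ∀ r, 0 ≤ L r := fun r => (norm_nonneg _).trans (by simpa using hgrowth 0 r 0)
  set B := ∫ ω, (1 + L (γ 0 ω)) ^ m ∂P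
  have hB : 0 ≤ B := integral_nonneg fun ω => by have := hL (γ 0 ω); positivity
  refine ⟨(1 + ‖x₀‖) ^ m * Real.exp (T * B), fun η hη hηT k hk => ?_⟩
  have hkη : k * η ≤ T := (le_div_iff₀ hη).1 ((Nat.cast_le.2 hk).trans
    (Nat.floor_le (div_nonneg (hη.trans (hηT.trans_le (min_le_right _ _))).le hη.le)))
  have hf : Measurable fun r => (1 + η * L r) ^ m := by fun_prop
  set g : ℕ → Ω → ℝ := fun j ω => (1 + η * L (γ j ω)) ^ m
  have hgid : ∀ j, IdentDistrib (g j) (g 0) P P := fun j => (hident j).comp hf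
  have hgind : iIndepFun g P := hindep.comp _ fun _ => hf
  obtain ⟨hg₀, hg₀_le⟩ := integral_one_add_mul_pow_le (fun ω => hL (γ 0 ω))
    (hLmeas.comp_aemeasurable (hident 0).aemeasurable_fst).aestronglyMeasurable
    (integrable_one_add_pow hLmom m) hη.le (hηT.le.trans (min_le_left _ _))
  have hpath : ∀ ω, ‖x η k ω‖ ^ m ≤ (1 + ‖x₀‖) ^ m * ∏ j ∈ range k, g j ω := by
    intro ω
    refine hx0 η ω ▸ norm_pow_le_prod_of_norm_sub_le (x := fun k => x η k ω)
      (c := fun j => η * L (γ j ω)) (fun j => ?_) k m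
    rw [hrec, add_sub_cancel_left, norm_smul, Real.norm_of_nonneg hη.le, mul_assoc]
    exact mul_le_mul_of_nonneg_left (hgrowth _ _ _) hη.le
  calc ∫ ω, ‖x η k ω‖ ^ m ∂P ≤ ∫ ω, (1 + ‖x₀‖) ^ m * ∏ j ∈ range k, g j ω ∂P :=
        integral_mono_of_nonneg (ae_of_all _ fun ω => by positivity)
          ((hgind.integrable_prod_range (fun j => (hgid j).integrable_iff.2 hg₀) k).const_mul _)
          (ae_of_all _ hpath)
    _ = (1 + ‖x₀‖) ^ m * (∫ ω, g 0 ω ∂P) ^ k := by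
        rw [integral_const_mul, hgind.integral_prod_range_eq_pow hgid]
    _ ≤ (1 + ‖x₀‖) ^ m * (1 + η * B) ^ k := by
        gcongr
        exact integral_nonneg fun ω => by have := hL (γ 0 ω); positivity
    _ ≤ (1 + ‖x₀‖) ^ m * Real.exp (T * B) := by
        gcongr
        exact one_add_mul_pow_le_exp hB hη.le hkη

/-- Uniform moment bounds for generalized stochastic gradient iterations:
if `|h(x, r, η)| ≤ L(r)(1 + |x|)` with all moments of `L(γ₀)` finite, then for every `m ≥ 1`
the `m`-th moment of the iterates `x_{k+1} = x_k + η h(x_k, γ_k, η)` is bounded uniformly in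
the learning rate `η ∈ (0, min 1 T)` and in `0 ≤ k ≤ ⌊T/η⌋`. -/
theorem sga_uniform_moment_bound
    {d : ℕ} (T : ℝ) (hT : 0 < T) (x₀ : EuclideanSpace ℝ (Fin d))
    {Ω : Type*} [MeasurableSpace Ω] (P : Measure Ω) [IsProbabilityMeasure P]
    {Γ : Type*} [MeasurableSpace Γ]
    (γ : ℕ → Ω → Γ) (hγmeas : ∀ k, Measurable (γ k))
    (hindep : iIndepFun γ P)
    (hident : ∀ k, IdentDistrib (γ k) (γ 0) P P)
    (h : EuclideanSpace ℝ (Fin d) → Γ → ℝ → EuclideanSpace ℝ (Fin d))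
    (hmeas : Measurable fun p : EuclideanSpace ℝ (Fin d) × Γ × ℝ => h p.1 p.2.1 p.2.2)
    (L : Γ → ℝ) (hLmeas : Measurable L) (hLpos : ∀ r, 0 < L r)
    (hgrowth : ∀ (x : EuclideanSpace ℝ (Fin d)) (r : Γ) (η : ℝ),
      ‖h x r η‖ ≤ L r * (1 + ‖x‖))
    (hLmom : ∀ m : ℕ, 1 ≤ m → Integrable (fun ω => (L (γ 0 ω)) ^ m) P)
    (x : ℝ → ℕ → Ω → EuclideanSpace ℝ (Fin d))
    (hx0 : ∀ η ω, x η 0 ω = x₀)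
    (hrec : ∀ η k ω, x η (k + 1) ω = x η k ω + η • h (x η k ω) (γ k ω) η) :
    ∀ m : ℕ, 1 ≤ m → ∃ C : ℝ,
      ∀ η : ℝ, 0 < η → η < min 1 T →
        ∀ k : ℕ, k ≤ ⌊T / η⌋₊ → ∫ ω, ‖x η k ω‖ ^ m ∂P ≤ C :=
  sga_uniform_moment_bound_general T x₀ P γ hindep hident h L hLmeas hgrowth hLmom x hx0 hrec
end

section
/- Let γ be a Γ-valued random variable and (r, x) ↦ f_r(x) a measurable map from Γ × ℝ^d to ℝ such that f_γ(x) is integrable for each x, f_γ is almost surely continuously differentiable in x, ∇f_γ(x) is square integrable for each x, and f(x) := E f_γ(x) is continuously differentiable with ∇f(x) = E ∇f_γ(x). Define Σ(x) := E[(∇f_γ(x) − ∇f(x))(∇f_γ(x) − ∇f(x))^T]. For η > 0 and μ > 0 define the one-step momentum-SGD update from (v, x) ∈ ℝ^d × ℝ^d by v₁ := v − μηv − η∇f_γ(x), x₁ := x + ηv₁, and set Δ := (v₁ − v, x₁ − x) ∈ ℝ^{2d}. Then: (i) exactly, E Δ = η(−μv − ∇f(x), v) + η²(0, −μv − ∇f(x));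 (ii) writing g := μv + ∇f(x), the second-moment matrix satisfies E[ΔΔ^T] = η² · [ (g g^T + Σ(x), −g v^T) ; (−v g^T, v v^T) ] + R, where, provided there are positive constants κ₁, κ₂ with E|∇f_γ(x)|² ≤ κ₁(1 + |x|^{2κ₂}) for all x, the remainder satisfies, for all η ∈ (0,1), |R| ≤ K(v, x) η³ for some function K of polynomial growth in (v, x) independent of η. -/
/-!
Put `h := μ v + ∇f_γ(x)`. Then `Δv = -η h` and `Δx = η v - η² h` are affine in `h`, so every
entry of `E[ΔΔᵀ]` is a polynomial in `η` whose coefficients involve only `E h = μ v + ∇f(x)` and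
`E[h hᵀ] = (E h)(E h)ᵀ + Σ(x)`. The `η²` terms give the main term; for `η ≤ 1` the `η³` and `η⁴`
terms are bounded entrywise by `η³ (‖v‖² + 2 E‖h‖²)`, and
`E‖h‖² ≤ 2μ²‖v‖² + 2 E‖∇f_γ(x)‖²` has polynomial growth by assumption.
-/

open MeasureTheory

/-- The Frobenius norm of a real square matrix. -/
noncomputable def frobNorm {n : Type*} [Fintype n] (M : Matrix n n ℝ) : ℝ :=
  Real.sqrt (∑ i, ∑ j, (M i j) ^ 2)

open ProbabilityTheory Matrix

section Moments

variable {Ω : Type*} [MeasurableSpace Ω] {P : Measure Ω}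

lemma EuclideanSpace.memLp_apply {ι : Type*} [Fintype ι] {X : Ω → EuclideanSpace ℝ ι}
    (hX : MemLp X 2 P) (i : ι) : MemLp (fun ω => X ω i) 2 P :=
  (EuclideanSpace.proj (𝕜 := ℝ) i).comp_memLp' hX

lemma EuclideanSpace.integral_apply {ι : Type*} [Fintype ι] {X : Ω → EuclideanSpace ℝ ι}
    (hX : Integrable X P) (i : ι) : (∫ ω, X ω ∂P) i = ∫ ω, X ω i ∂P :=
  ((EuclideanSpace.proj (𝕜 := ℝ) i).integral_comp_comm hX).symm

variable [IsProbabilityMeasure P]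

lemma integral_const_add {E : Type*} [NormedAddCommGroup E] [NormedSpace ℝ E] [CompleteSpace E]
    {X : Ω → E} (hX : Integrable X P) (c : E) : ∫ ω, c + X ω ∂P = c + ∫ ω, X ω ∂P := by
  rw [integral_add (integrable_const c) hX, integral_const, probReal_univ, one_smul]

lemma integral_affine_mul_affine {X Y : Ω → ℝ} (hX : MemLp X 2 P) (hY : MemLp Y 2 P)
    (a b c e : ℝ) :
    ∫ ω, (a + b * X ω) * (c + e * Y ω) ∂P
      = a * c + a * e * ∫ ω, Y ω ∂P + b * c * ∫ ω, X ω ∂P + b * e * ∫ ω, X ω * Y ω ∂P := by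
  have hXY : Integrable (fun ω => X ω * Y ω) P := hX.integrable_mul hY
  have hX1 := hX.integrable one_le_two
  have hY1 := hY.integrable one_le_two
  calc ∫ ω, (a + b * X ω) * (c + e * Y ω) ∂P
      = ∫ ω, (a * c + (a * e * Y ω + (b * c * X ω + b * e * (X ω * Y ω)))) ∂P := by
        congr 1 with ω; ring
    _ = _ := by
        rw [integral_add (integrable_const _) (by fun_prop),
          integral_add (by fun_prop) (by fun_prop), integral_add (by fun_prop) (by fun_prop),
          integral_const, integral_const_mul, integral_const_mul, integral_const_mul]
        simp [add_assoc]

lemma sq_norm_integral_le {E : Type*} [NormedAddCommGroup E] [NormedSpace ℝ E] [CompleteSpace E]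
    {X : Ω → E} (hX : MemLp X 2 P) : ‖∫ ω, X ω ∂P‖ ^ 2 ≤ ∫ ω, ‖X ω‖ ^ 2 ∂P :=
  (convexOn_univ_norm.pow (fun _ _ => norm_nonneg _) 2).map_integral_le
    (by fun_prop) isClosed_univ (by simp) (hX.integrable one_le_two) hX.integrable_norm_pow'

lemma integral_norm_const_add_sq_le {E : Type*} [NormedAddCommGroup E] {X : Ω → E}
    (hX : MemLp X 2 P) (a : E) :
    ∫ ω, ‖a + X ω‖ ^ 2 ∂P ≤ 2 * ‖a‖ ^ 2 + 2 * ∫ ω, ‖X ω‖ ^ 2 ∂P := by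
  have hX2 : Integrable (fun ω => ‖X ω‖ ^ 2) P := hX.integrable_norm_pow'
  calc ∫ ω, ‖a + X ω‖ ^ 2 ∂P ≤ ∫ ω, (2 * ‖a‖ ^ 2 + 2 * ‖X ω‖ ^ 2) ∂P := by
        refine integral_mono ((memLp_const a).add hX).integrable_norm_pow' (by fun_prop)
          fun ω => ?_
        nlinarith [norm_add_le a (X ω), norm_nonneg (a + X ω), sq_nonneg (‖a‖ - ‖X ω‖)]
    _ = 2 * ‖a‖ ^ 2 + 2 * ∫ ω, ‖X ω‖ ^ 2 ∂P := by
        rw [integral_add (integrable_const _) (hX2.const_mul 2), integral_const,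
          integral_const_mul]
        simp

variable {ι : Type*} [Fintype ι]

noncomputable def secondMoment (P : Measure Ω) (X : Ω → EuclideanSpace ℝ ι) : Matrix ι ι ℝ :=
  Matrix.of fun i j => ∫ ω, X ω i * X ω j ∂P

lemma secondMoment_const_add {X : Ω → EuclideanSpace ℝ ι} (hX : MemLp X 2 P)
    (c : EuclideanSpace ℝ ι) (i j : ι) :
    secondMoment P (fun ω => c + X ω) i j
      = (c + ∫ ω, X ω ∂P) i * (c + ∫ ω, X ω ∂P) j
        + cov[fun ω => X ω i, fun ω => X ω j; P] := by
  have hXi := EuclideanSpace.memLp_apply hX i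
  have hXj := EuclideanSpace.memLp_apply hX j
  have hX1 := hX.integrable one_le_two
  have hcov := covariance_eq_sub hXi hXj
  simp only [Pi.mul_apply] at hcov
  calc secondMoment P (fun ω => c + X ω) i j
      = ∫ ω, (c i + 1 * X ω i) * (c j + 1 * X ω j) ∂P := by simp [secondMoment]
    _ = _ := by
        rw [integral_affine_mul_affine hXi hXj, hcov, PiLp.add_apply, PiLp.add_apply,
          EuclideanSpace.integral_apply hX1, EuclideanSpace.integral_apply hX1]
        ring

lemma abs_secondMoment_le {X : Ω → EuclideanSpace ℝ ι} (hX : MemLp X 2 P) (i j : ι) :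
    |secondMoment P X i j| ≤ ∫ ω, ‖X ω‖ ^ 2 ∂P := by
  rw [← Real.norm_eq_abs, secondMoment, Matrix.of_apply]
  refine norm_integral_le_of_norm_le hX.integrable_norm_pow' (.of_forall fun ω => ?_)
  rw [norm_mul, sq]
  exact mul_le_mul (PiLp.norm_apply_le _ i) (PiLp.norm_apply_le _ j) (norm_nonneg _)
    (norm_nonneg _)

end Moments

lemma frobNorm_le_of_abs_le {n : Type*} [Fintype n] {M : Matrix n n ℝ} {c : ℝ} (hc : 0 ≤ c)
    (hM : ∀ i j, |M i j| ≤ c) : frobNorm M ≤ Fintype.card n * c := by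
  have hsum : ∑ i, ∑ j, M i j ^ 2 ≤ (Fintype.card n * c) ^ 2 := by
    calc ∑ i, ∑ j, M i j ^ 2 ≤ ∑ _i : n, ∑ _j : n, c ^ 2 :=
          Finset.sum_le_sum fun i _ => Finset.sum_le_sum fun j _ =>
            sq_le_sq' (abs_le.mp (hM i j)).1 (abs_le.mp (hM i j)).2
      _ = (Fintype.card n * c) ^ 2 := by simp; ring
  exact Real.sqrt_le_iff.mpr ⟨by positivity, hsum⟩

section Remainder

variable {ι : Type*} [Fintype ι]

lemma EuclideanSpace.abs_apply_mul_apply_add_le (v g : EuclideanSpace ℝ ι) (i j : ι) :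
    |v i * g j + g i * v j| ≤ ‖v‖ ^ 2 + ‖g‖ ^ 2 := by
  have hvi := PiLp.norm_apply_le v i
  have hvj := PiLp.norm_apply_le v j
  have hgi := PiLp.norm_apply_le g i
  have hgj := PiLp.norm_apply_le g j
  simp only [Real.norm_eq_abs] at hvi hvj hgi hgj
  calc |v i * g j + g i * v j| ≤ |v i| * |g j| + |g i| * |v j| := by
        simpa only [abs_mul] using abs_add_le (v i * g j) (g i * v j)
    _ ≤ 2 * ‖v‖ * ‖g‖ := by
        nlinarith [abs_nonneg (v i), abs_nonneg (g j), abs_nonneg (g i), norm_nonneg v]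
    _ ≤ ‖v‖ ^ 2 + ‖g‖ ^ 2 := two_mul_le_add_sq _ _

/-- The `η³` and `η⁴` part of `E[ΔΔᵀ]` for `Δ = (-η h, η v - η² h)`, where `g = E h` and
`H = E[h hᵀ]`. -/
def msgdRemainder (η : ℝ) (v g : EuclideanSpace ℝ ι) (H : Matrix ι ι ℝ) :
    Matrix (ι ⊕ ι) (ι ⊕ ι) ℝ :=
  fromBlocks 0 (η ^ 3 • H) (η ^ 3 • H) (η ^ 4 • H - η ^ 3 • (vecMulVec v g + vecMulVec g v))

lemma abs_msgdRemainder_le {η S : ℝ} (hη₀ : 0 ≤ η) (hη₁ : η ≤ 1) (v g : EuclideanSpace ℝ ι)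
    {H : Matrix ι ι ℝ} (hH : ∀ i j, |H i j| ≤ S) (hg : ‖g‖ ^ 2 ≤ S) (p q : ι ⊕ ι) :
    |msgdRemainder η v g H p q| ≤ η ^ 3 * (‖v‖ ^ 2 + 2 * S) := by
  have hS : 0 ≤ S := (sq_nonneg _).trans hg
  have hη3 : 0 ≤ η ^ 3 := by positivity
  have hHη : ∀ i j, |η ^ 3 * H i j| ≤ η ^ 3 * S := fun i j => by
    rw [abs_mul, abs_of_nonneg hη3]; exact mul_le_mul_of_nonneg_left (hH i j) hη3
  rcases p with i | i <;> rcases q with j | j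
  · simp [msgdRemainder]; positivity
  · simpa [msgdRemainder] using (hHη i j).trans (by nlinarith [sq_nonneg ‖v‖])
  · simpa [msgdRemainder] using (hHη i j).trans (by nlinarith [sq_nonneg ‖v‖])
  · have hH4 : |η ^ 4 * H i j| ≤ η ^ 3 * S := by
      rw [abs_mul, abs_of_nonneg (by positivity)]
      calc η ^ 4 * |H i j| ≤ η ^ 3 * |H i j| :=
            mul_le_mul_of_nonneg_right (pow_le_pow_of_le_one hη₀ hη₁ (by norm_num)) (abs_nonneg _)
        _ ≤ η ^ 3 * S := mul_le_mul_of_nonneg_left (hH i j) hη3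
    have hcross : |η ^ 3 * (v i * g j + g i * v j)| ≤ η ^ 3 * (‖v‖ ^ 2 + S) := by
      rw [abs_mul, abs_of_nonneg hη3]
      exact mul_le_mul_of_nonneg_left
        ((EuclideanSpace.abs_apply_mul_apply_add_le v g i j).trans (by linarith)) hη3
    simp only [msgdRemainder, fromBlocks_apply₂₂, Matrix.sub_apply, Matrix.smul_apply,
      Matrix.add_apply, vecMulVec_apply, smul_eq_mul]
    calc |η ^ 4 * H i j - η ^ 3 * (v i * g j + g i * v j)|
        ≤ |η ^ 4 * H i j| + |η ^ 3 * (v i * g j + g i * v j)| := abs_sub _ _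
      _ ≤ η ^ 3 * S + η ^ 3 * (‖v‖ ^ 2 + S) := add_le_add hH4 hcross
      _ = η ^ 3 * (‖v‖ ^ 2 + 2 * S) := by ring

lemma frobNorm_msgdRemainder_le {η S : ℝ} (hη₀ : 0 ≤ η) (hη₁ : η ≤ 1)
    (v g : EuclideanSpace ℝ ι) {H : Matrix ι ι ℝ} (hH : ∀ i j, |H i j| ≤ S)
    (hg : ‖g‖ ^ 2 ≤ S) :
    frobNorm (msgdRemainder η v g H) ≤ 2 * Fintype.card ι * (‖v‖ ^ 2 + 2 * S) * η ^ 3 := by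
  have hS : 0 ≤ S := (sq_nonneg _).trans hg
  calc frobNorm (msgdRemainder η v g H)
      ≤ Fintype.card (ι ⊕ ι) * (η ^ 3 * (‖v‖ ^ 2 + 2 * S)) :=
        frobNorm_le_of_abs_le (by positivity) (abs_msgdRemainder_le hη₀ hη₁ v g hH hg)
    _ = 2 * Fintype.card ι * (‖v‖ ^ 2 + 2 * S) * η ^ 3 := by
        rw [Fintype.card_sum]; push_cast; ring

end Remainder

lemma mul_norm_sq_add_mul_one_add_norm_pow_le {E F : Type*} [SeminormedAddCommGroup E]
    [SeminormedAddCommGroup F] {a b : ℝ} (ha : 0 ≤ a) (hb : 0 ≤ b) {n : ℕ} (hn : n ≠ 0) (v : E) (x : F) :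
    a * ‖v‖ ^ 2 + b * (1 + ‖x‖ ^ (2 * n)) ≤ (a + b) * (1 + (‖v‖ ^ 2 + ‖x‖ ^ 2) ^ n) := by
  have hv : ‖v‖ ^ 2 ≤ 1 + (‖v‖ ^ 2 + ‖x‖ ^ 2) ^ n := by
    rcases le_total (‖v‖ ^ 2 + ‖x‖ ^ 2) 1 with h | h
    · linarith [pow_nonneg (by positivity : 0 ≤ ‖v‖ ^ 2 + ‖x‖ ^ 2) n, sq_nonneg ‖x‖]
    · linarith [le_self_pow₀ h hn, sq_nonneg ‖x‖]
  have hx : 1 + ‖x‖ ^ (2 * n) ≤ 1 + (‖v‖ ^ 2 + ‖x‖ ^ 2) ^ n := by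
    rw [pow_mul]; gcongr; linarith [sq_nonneg ‖v‖]
  nlinarith

section OneStep

variable {Ω : Type*} [MeasurableSpace Ω] {P : Measure Ω} [IsProbabilityMeasure P]
  {ι : Type*} [Fintype ι]

lemma integral_msgd_increment_mul {X : Ω → EuclideanSpace ℝ ι} (hX : MemLp X 2 P) (η : ℝ)
    (v : EuclideanSpace ℝ ι) (i j : ι) :
    ∫ ω, (-η * X ω i) * (-η * X ω j) ∂P = η ^ 2 * secondMoment P X i j
        + msgdRemainder η v (∫ ω, X ω ∂P) (secondMoment P X) (.inl i) (.inl j) ∧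
    ∫ ω, (-η * X ω i) * (η * v j - η ^ 2 * X ω j) ∂P = η ^ 2 * (-((∫ ω, X ω ∂P) i * v j))
        + msgdRemainder η v (∫ ω, X ω ∂P) (secondMoment P X) (.inl i) (.inr j) ∧
    ∫ ω, (η * v i - η ^ 2 * X ω i) * (-η * X ω j) ∂P = η ^ 2 * (-(v i * (∫ ω, X ω ∂P) j))
        + msgdRemainder η v (∫ ω, X ω ∂P) (secondMoment P X) (.inr i) (.inl j) ∧
    ∫ ω, (η * v i - η ^ 2 * X ω i) * (η * v j - η ^ 2 * X ω j) ∂P = η ^ 2 * (v i * v j)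
        + msgdRemainder η v (∫ ω, X ω ∂P) (secondMoment P X) (.inr i) (.inr j) := by
  have hX1 := hX.integrable one_le_two
  have h := integral_affine_mul_affine (EuclideanSpace.memLp_apply hX i)
    (EuclideanSpace.memLp_apply hX j)
  simp only [msgdRemainder, secondMoment, fromBlocks_apply₁₁, fromBlocks_apply₁₂,
    fromBlocks_apply₂₁, fromBlocks_apply₂₂, Matrix.sub_apply, Matrix.smul_apply,
    Matrix.add_apply, vecMulVec_apply, Matrix.zero_apply, Matrix.of_apply, smul_eq_mul,
    EuclideanSpace.integral_apply hX1]
  refine ⟨?_, ?_, ?_, ?_⟩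
  · rw [integral_congr_ae (.of_forall fun ω => show _ = (0 + -η * X ω i) * (0 + -η * X ω j) by
      ring), h]
    ring
  · rw [integral_congr_ae (.of_forall fun ω => show _ = (0 + -η * X ω i) *
      (η * v j + -η ^ 2 * X ω j) by ring), h]
    ring
  · rw [integral_congr_ae (.of_forall fun ω => show _ = (η * v i + -η ^ 2 * X ω i) *
      (0 + -η * X ω j) by ring), h]
    ring
  · rw [integral_congr_ae (.of_forall fun ω => show _ = (η * v i + -η ^ 2 * X ω i) *
      (η * v j + -η ^ 2 * X ω j) by ring), h]
    ring

lemma frobNorm_msgdRemainder_secondMoment_le {X : Ω → EuclideanSpace ℝ ι} (hX : MemLp X 2 P)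
    {η : ℝ} (hη₀ : 0 ≤ η) (hη₁ : η ≤ 1) (v : EuclideanSpace ℝ ι) :
    frobNorm (msgdRemainder η v (∫ ω, X ω ∂P) (secondMoment P X))
      ≤ 2 * Fintype.card ι * (‖v‖ ^ 2 + 2 * ∫ ω, ‖X ω‖ ^ 2 ∂P) * η ^ 3 :=
  frobNorm_msgdRemainder_le hη₀ hη₁ v _ (abs_secondMoment_le hX) (sq_norm_integral_le hX)

end OneStep

theorem msgd_one_step_moment_expansion_general
    {d : ℕ} {Ω : Type*} [MeasurableSpace Ω] (P : Measure Ω) [IsProbabilityMeasure P]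
    {Γ : Type*} (γ : Ω → Γ)
    (f : Γ → EuclideanSpace ℝ (Fin d) → ℝ)
    (hgradL2 : ∀ x, MemLp (fun ω => gradient (f (γ ω)) x) 2 P)
    (F : EuclideanSpace ℝ (Fin d) → ℝ)
    (hFgrad : ∀ x, gradient F x = ∫ ω, gradient (f (γ ω)) x ∂P)
    (Sig : EuclideanSpace ℝ (Fin d) → Matrix (Fin d) (Fin d) ℝ)
    (hSig : ∀ x i j, Sig x i j =
      ∫ ω, (gradient (f (γ ω)) x i - gradient F x i) *
        (gradient (f (γ ω)) x j - gradient F x j) ∂P)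
    (μ : ℝ)
    (Δv Δx : ℝ → EuclideanSpace ℝ (Fin d) → EuclideanSpace ℝ (Fin d) → Ω →
      EuclideanSpace ℝ (Fin d))
    (hΔv : ∀ η v x ω, Δv η v x ω = -((μ * η) • v) - η • gradient (f (γ ω)) x)
    (hΔx : ∀ η v x ω, Δx η v x ω = η • (v + Δv η v x ω)) :
    -- (i) exact first moment
    ((∀ η : ℝ, 0 < η → ∀ v x,
      (∫ ω, Δv η v x ω ∂P) = η • (-(μ • v) - gradient F x) ∧
      (∫ ω, Δx η v x ω ∂P) = η • v + (η ^ 2) • (-(μ • v) - gradient F x))) ∧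
    -- (ii) second moments up to a remainder of order η³ with polynomial-growth constant
    (∀ κ₁ : ℝ, ∀ κ₂ : ℕ, 0 < κ₁ → 0 < κ₂ →
      (∀ y, ∫ ω, ‖gradient (f (γ ω)) y‖ ^ 2 ∂P ≤ κ₁ * (1 + ‖y‖ ^ (2 * κ₂))) →
      ∃ K : EuclideanSpace ℝ (Fin d) → EuclideanSpace ℝ (Fin d) → ℝ,
        (∃ c₁ : ℝ, ∃ c₂ : ℕ, 0 < c₁ ∧ 0 < c₂ ∧
          ∀ v x, |K v x| ≤ c₁ * (1 + (‖v‖ ^ 2 + ‖x‖ ^ 2) ^ c₂)) ∧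
        ∀ η : ℝ, 0 < η → η < 1 → ∀ v x,
          ∃ R : Matrix (Fin d ⊕ Fin d) (Fin d ⊕ Fin d) ℝ,
            (∀ i j : Fin d,
              (∫ ω, Δv η v x ω i * Δv η v x ω j ∂P) =
                η ^ 2 * ((μ • v + gradient F x) i * (μ • v + gradient F x) j + Sig x i j)
                  + R (Sum.inl i) (Sum.inl j) ∧
              (∫ ω, Δv η v x ω i * Δx η v x ω j ∂P) =
                η ^ 2 * (-((μ • v + gradient F x) i * v j)) + R (Sum.inl i) (Sum.inr j) ∧
              (∫ ω, Δx η v x ω i * Δv η v x ω j ∂P) =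
                η ^ 2 * (-(v i * (μ • v + gradient F x) j)) + R (Sum.inr i) (Sum.inl j) ∧
              (∫ ω, Δx η v x ω i * Δx η v x ω j ∂P) =
                η ^ 2 * (v i * v j) + R (Sum.inr i) (Sum.inr j)) ∧
            frobNorm R ≤ K v x * η ^ 3) := by
  have hG : ∀ x, Integrable (fun ω => gradient (f (γ ω)) x) P :=
    fun x => (hgradL2 x).integrable one_le_two
  have hh : ∀ v x, MemLp (fun ω => μ • v + gradient (f (γ ω)) x) 2 P :=
    fun v x => (memLp_const (μ • v)).add (hgradL2 x)
  have hmean : ∀ v x, ∫ ω, μ • v + gradient (f (γ ω)) x ∂P = μ • v + gradient F x :=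
    fun v x => by rw [integral_const_add (hG x), hFgrad]
  have hΔv' : ∀ η v x ω, Δv η v x ω = (-η) • (μ • v + gradient (f (γ ω)) x) :=
    fun η v x ω => by rw [hΔv]; module
  have hΔx' : ∀ η v x ω, Δx η v x ω = η • v - η ^ 2 • (μ • v + gradient (f (γ ω)) x) :=
    fun η v x ω => by rw [hΔx, hΔv']; module
  refine ⟨fun η _ v x => ⟨?_, ?_⟩, fun κ₁ κ₂ hκ₁ hκ₂ hbound => ?_⟩
  · simp_rw [hΔv', integral_smul, hmean]; module
  · have hint := (hh v x).integrable one_le_two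
    simp_rw [hΔx']
    rw [integral_sub (integrable_const _) (by fun_prop), integral_const, integral_smul, hmean]
    simp only [probReal_univ, one_smul]; module
  refine ⟨fun v x => 2 * d * ((1 + 4 * μ ^ 2) * ‖v‖ ^ 2 + 4 * κ₁ * (1 + ‖x‖ ^ (2 * κ₂))),
    ⟨(2 * d + 1) * (1 + 4 * μ ^ 2 + 4 * κ₁), κ₂, by positivity, hκ₂, fun v x => ?_⟩,
    fun η hη₀ hη₁ v x => ?_⟩
  · rw [abs_of_nonneg (by positivity), mul_assoc]
    exact (mul_le_mul_of_nonneg_left (mul_norm_sq_add_mul_one_add_norm_pow_le (by positivity)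
      (by positivity) hκ₂.ne' v x) (by positivity)).trans
      (mul_le_mul_of_nonneg_right (by linarith) (by positivity))
  refine ⟨msgdRemainder η v (μ • v + gradient F x)
    (secondMoment P fun ω => μ • v + gradient (f (γ ω)) x), fun i j => ?_, ?_⟩
  · have hsecond : secondMoment P (fun ω => μ • v + gradient (f (γ ω)) x) i j
        = (μ • v + gradient F x) i * (μ • v + gradient F x) j + Sig x i j := by
      rw [secondMoment_const_add (hgradL2 x), ← hFgrad, hSig, covariance,
        ← EuclideanSpace.integral_apply (hG x), ← EuclideanSpace.integral_apply (hG x), ← hFgrad]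
    simp only [hΔv', hΔx', PiLp.sub_apply, PiLp.smul_apply, smul_eq_mul]
    rw [← hsecond, ← hmean v x]
    exact integral_msgd_increment_mul (hh v x) η v i j
  · have hS := integral_norm_const_add_sq_le (hgradL2 x) (μ • v)
    rw [norm_smul, mul_pow, Real.norm_eq_abs, sq_abs] at hS
    refine (hmean v x ▸ frobNorm_msgdRemainder_secondMoment_le (hh v x) hη₀.le hη₁.le v).trans ?_
    rw [Fintype.card_fin]
    refine mul_le_mul_of_nonneg_right (mul_le_mul_of_nonneg_left ?_ (by positivity))
      (by positivity)
    linarith [hbound x]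

/-- Moment expansions for the one-step momentum-SGD increment
`Δ = (v₁ − v, x₁ − x)` with `v₁ = v − μηv − η∇f_γ(x)`, `x₁ = x + ηv₁`:
(i) the exact first moment; (ii) the second-moment block matrix up to an `O(η³)`
remainder of polynomial growth in `(v, x)`, provided `E|∇f_γ(x)|²` has polynomial growth. -/
theorem msgd_one_step_moment_expansion
    {d : ℕ} {Ω : Type*} [MeasurableSpace Ω] (P : Measure Ω) [IsProbabilityMeasure P]
    {Γ : Type*} [MeasurableSpace Γ] (γ : Ω → Γ) (hγ : Measurable γ)
    (f : Γ → EuclideanSpace ℝ (Fin d) → ℝ)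
    (hfmeas : Measurable (Function.uncurry f))
    (hfint : ∀ x, Integrable (fun ω => f (γ ω) x) P)
    (hfC1 : ∀ᵐ ω ∂P, ContDiff ℝ 1 (f (γ ω)))
    (hgradL2 : ∀ x, MemLp (fun ω => gradient (f (γ ω)) x) 2 P)
    (F : EuclideanSpace ℝ (Fin d) → ℝ)
    (hF : ∀ x, F x = ∫ ω, f (γ ω) x ∂P)
    (hFC1 : ContDiff ℝ 1 F)
    (hFgrad : ∀ x, gradient F x = ∫ ω, gradient (f (γ ω)) x ∂P)
    (Sig : EuclideanSpace ℝ (Fin d) → Matrix (Fin d) (Fin d) ℝ)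
    (hSig : ∀ x i j, Sig x i j =
      ∫ ω, (gradient (f (γ ω)) x i - gradient F x i) *
        (gradient (f (γ ω)) x j - gradient F x j) ∂P)
    (μ : ℝ) (hμ : 0 < μ)
    (Δv Δx : ℝ → EuclideanSpace ℝ (Fin d) → EuclideanSpace ℝ (Fin d) → Ω →
      EuclideanSpace ℝ (Fin d))
    (hΔv : ∀ η v x ω, Δv η v x ω = -((μ * η) • v) - η • gradient (f (γ ω)) x)
    (hΔx : ∀ η v x ω, Δx η v x ω = η • (v + Δv η v x ω)) :
    -- (i) exact first moment
    ((∀ η : ℝ, 0 < η → ∀ v x,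
      (∫ ω, Δv η v x ω ∂P) = η • (-(μ • v) - gradient F x) ∧
      (∫ ω, Δx η v x ω ∂P) = η • v + (η ^ 2) • (-(μ • v) - gradient F x))) ∧
    -- (ii) second moments up to a remainder of order η³ with polynomial-growth constant
    (∀ κ₁ : ℝ, ∀ κ₂ : ℕ, 0 < κ₁ → 0 < κ₂ →
      (∀ y, ∫ ω, ‖gradient (f (γ ω)) y‖ ^ 2 ∂P ≤ κ₁ * (1 + ‖y‖ ^ (2 * κ₂))) →
      ∃ K : EuclideanSpace ℝ (Fin d) → EuclideanSpace ℝ (Fin d) → ℝ,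
        (∃ c₁ : ℝ, ∃ c₂ : ℕ, 0 < c₁ ∧ 0 < c₂ ∧
          ∀ v x, |K v x| ≤ c₁ * (1 + (‖v‖ ^ 2 + ‖x‖ ^ 2) ^ c₂)) ∧
        ∀ η : ℝ, 0 < η → η < 1 → ∀ v x,
          ∃ R : Matrix (Fin d ⊕ Fin d) (Fin d ⊕ Fin d) ℝ,
            (∀ i j : Fin d,
              (∫ ω, Δv η v x ω i * Δv η v x ω j ∂P) =
                η ^ 2 * ((μ • v + gradient F x) i * (μ • v + gradient F x) j + Sig x i j)
                  + R (Sum.inl i) (Sum.inl j) ∧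
              (∫ ω, Δv η v x ω i * Δx η v x ω j ∂P) =
                η ^ 2 * (-((μ • v + gradient F x) i * v j)) + R (Sum.inl i) (Sum.inr j) ∧
              (∫ ω, Δx η v x ω i * Δv η v x ω j ∂P) =
                η ^ 2 * (-(v i * (μ • v + gradient F x) j)) + R (Sum.inr i) (Sum.inl j) ∧
              (∫ ω, Δx η v x ω i * Δx η v x ω j ∂P) =
                η ^ 2 * (v i * v j) + R (Sum.inr i) (Sum.inr j)) ∧
            frobNorm R ≤ K v x * η ^ 3) :=
  msgd_one_step_moment_expansion_general P γ f hgradL2 F hFgrad Sig hSig μ Δv Δx hΔv hΔx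
end

section
/- Let γ be a Γ-valued random variable and (r, x) ↦ f_r(x) a measurable map from Γ × ℝ^d to ℝ such that f_γ(x) is integrable for each x, f_γ is almost surely continuously differentiable in x, ∇f_γ satisfies |∇f_γ(x) − ∇f_γ(y)| ≤ L_γ |x − y| almost surely for all x, y with E L_γ² < ∞, and f(x) := E f_γ(x) is twice continuously differentiable with ∇f(x) = E ∇f_γ(x) and with ∇²f Lipschitz. For η ∈ (0,1) and μ > 0 define the one-step stochastic Nesterov update from (v, x) ∈ ℝ^d × ℝ^d by v₁ := v − μηv − η∇f_γ(x + η(1 − μη)v), x₁ := x + ηv₁, and set Δ := (v₁ − v, x₁ − x) ∈ ℝ^{2d}. Then there exists a function K of polynomial growth in (v, x), independent of η ∈ (0,1), such that | E Δ − η(−μv − ∇f(x), v) − η²(−∇²f(x)v, −μv − ∇f(x)) | ≤ K(v, x) η³. -/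
open MeasureTheory InnerProductSpace Filter Topology

/-!
Taking expectations in the update, `E Δv = -μηv - η ∇f(x + η(1 - μη)v)` because
`∇f = E ∇f_γ`; this needs `∇f_γ(y)` to be integrable, which holds since it is an a.e. limit of
difference quotients and is dominated, through the Taylor bound for a Lipschitz gradient, by
`∑ᵢ (|f_γ(y + eᵢ)| + |f_γ(y)| + 1 + L_γ²)`. Expanding `∇f` to first order around `x` with a
Lipschitz Hessian leaves a remainder of order `η³ (|v|² + |∇²f(x) v|)`, and
`|∇²f(x) v| ≤ (|∇²f(0)| + L |x|) |v|` grows polynomially.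
-/

theorem norm_sub_sub_fderiv_le_of_lipschitz_fderiv {E F : Type*} [NormedAddCommGroup E]
    [NormedSpace ℝ E] [NormedAddCommGroup F] [NormedSpace ℝ F] {g : E → F}
    (hg : Differentiable ℝ g) {L : ℝ} (hL0 : 0 ≤ L)
    (hL : ∀ z w, ‖fderiv ℝ g z - fderiv ℝ g w‖ ≤ L * ‖z - w‖) (y u : E) :
    ‖g (y + u) - g y - fderiv ℝ g y u‖ ≤ L * ‖u‖ ^ 2 := by
  have := (convex_closedBall y ‖u‖).norm_image_sub_le_of_norm_fderiv_le' (y := y + u)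
    (fun z _ => hg z)
    (fun z hz => (hL z y).trans (mul_le_mul_of_nonneg_left (mem_closedBall_iff_norm.1 hz) hL0))
    (Metric.mem_closedBall_self (norm_nonneg u)) (by simp)
  simpa [sq, mul_assoc] using this

section Gradient

variable {E : Type*} [NormedAddCommGroup E] [InnerProductSpace ℝ E] [CompleteSpace E]

theorem norm_gradient_sub_gradient (h : E → ℝ) (z w : E) :
    ‖gradient h z - gradient h w‖ = ‖fderiv ℝ h z - fderiv ℝ h w‖ := by
  rw [gradient, gradient, ← map_sub, LinearIsometryEquiv.norm_map]

theorem abs_fderiv_apply_le_of_lipschitz_gradient {h : E → ℝ} (hh : Differentiable ℝ h)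
    {L : ℝ} (hL0 : 0 ≤ L) (hL : ∀ z w, ‖gradient h z - gradient h w‖ ≤ L * ‖z - w‖)
    (y u : E) : |fderiv ℝ h y u| ≤ |h (y + u)| + |h y| + L * ‖u‖ ^ 2 := by
  have taylor := norm_sub_sub_fderiv_le_of_lipschitz_fderiv hh hL0
    (fun z w => norm_gradient_sub_gradient h z w ▸ hL z w) y u
  rw [Real.norm_eq_abs, abs_le] at taylor
  refine abs_le.2 ⟨?_, ?_⟩ <;>
    linarith [le_abs_self (h (y + u)), neg_abs_le (h (y + u)), le_abs_self (h y),
      neg_abs_le (h y)]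

theorem OrthonormalBasis.gradient_eq_sum {ι : Type*} [Fintype ι]
    (b : OrthonormalBasis ι ℝ E) (h : E → ℝ) (y : E) :
    gradient h y = ∑ i, fderiv ℝ h y (b i) • b i := by
  simpa [inner_gradient_right] using (b.sum_repr' (gradient h y)).symm

theorem OrthonormalBasis.norm_gradient_le_sum {ι : Type*} [Fintype ι]
    (b : OrthonormalBasis ι ℝ E) (h : E → ℝ) (y : E) :
    ‖gradient h y‖ ≤ ∑ i, |fderiv ℝ h y (b i)| := by
  rw [b.gradient_eq_sum]
  refine (norm_sum_le _ _).trans (Finset.sum_le_sum fun i _ => ?_)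
  rw [norm_smul, b.norm_eq_one, mul_one, Real.norm_eq_abs]

theorem differentiable_gradient_of_contDiff_two {F : E → ℝ} (hF : ContDiff ℝ 2 F) :
    Differentiable ℝ (gradient F) :=
  ((toDual ℝ E).symm.contDiff.differentiable one_ne_zero).comp
    ((hF.fderiv_right (by norm_num)).differentiable one_ne_zero)

end Gradient

section RandomGradient

variable {E : Type*} [NormedAddCommGroup E] [InnerProductSpace ℝ E] [FiniteDimensional ℝ E]
  [MeasurableSpace E] [BorelSpace E] {Ω : Type*} [MeasurableSpace Ω] {P : Measure Ω}
  {h : Ω → E → ℝ}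

theorem aestronglyMeasurable_gradient_apply (hmeas : ∀ p, AEMeasurable (fun ω => h ω p) P)
    {y : E} (hdiff : ∀ᵐ ω ∂P, DifferentiableAt ℝ (h ω) y) :
    AEStronglyMeasurable (fun ω => gradient (h ω) y) P := by
  set b := stdOrthonormalBasis ℝ E
  let q : ℕ → Ω → E := fun n ω =>
    ∑ i, ((n : ℝ) • (h ω (y + (n : ℝ)⁻¹ • b i) - h ω y)) • b i
  have hq : ∀ n, AEMeasurable (q n) P := fun n =>
    Finset.aemeasurable_fun_sum _ fun i _ =>
      (((hmeas _).sub (hmeas y)).const_smul (n : ℝ)).smul_const (b i)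
  refine (aemeasurable_of_tendsto_metrizable_ae atTop hq ?_).aestronglyMeasurable
  filter_upwards [hdiff] with ω hω
  rw [b.gradient_eq_sum]
  have hn : Tendsto (fun n : ℕ => ‖(n : ℝ)‖) atTop atTop := by
    simpa using tendsto_natCast_atTop_atTop
  exact tendsto_finsetSum _ fun i _ => (hω.hasFDerivAt.lim (b i) hn).smul_const (b i)

theorem integrable_gradient_apply_of_lipschitz (hint : ∀ p, Integrable (fun ω => h ω p) P)
    (hdiff : ∀ᵐ ω ∂P, Differentiable ℝ (h ω)) {L : Ω → ℝ} (hL0 : ∀ ω, 0 ≤ L ω)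
    (hLint : Integrable L P)
    (hLip : ∀ᵐ ω ∂P, ∀ z w, ‖gradient (h ω) z - gradient (h ω) w‖ ≤ L ω * ‖z - w‖) (y : E) :
    Integrable (fun ω => gradient (h ω) y) P := by
  set b := stdOrthonormalBasis ℝ E
  refine Integrable.mono' (g := fun ω => ∑ i, (|h ω (y + b i)| + |h ω y| + L ω))
    (integrable_finsetSum _ fun i _ => ((hint _).abs.add (hint y).abs).add hLint)
    (aestronglyMeasurable_gradient_apply (fun p => (hint p).aemeasurable)
      (hdiff.mono fun ω hω => hω y)) ?_
  filter_upwards [hdiff, hLip] with ω hω hωLip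
  refine (b.norm_gradient_le_sum _ y).trans (Finset.sum_le_sum fun i _ => ?_)
  simpa [b.norm_eq_one] using abs_fderiv_apply_le_of_lipschitz_gradient hω (hL0 ω) hωLip y (b i)

end RandomGradient

section NesterovDrift

variable {E : Type*} [NormedAddCommGroup E] [NormedSpace ℝ E] {G : E → E} {Lh μ η : ℝ}

theorem norm_nesterov_velocity_drift_sub_le (hG : Differentiable ℝ G) (hLh0 : 0 ≤ Lh)
    (hLh : ∀ x y, ‖fderiv ℝ G x - fderiv ℝ G y‖ ≤ Lh * ‖x - y‖) (hμ : 0 ≤ μ) (hη0 : 0 ≤ η)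
    (hη1 : η ≤ 1) (v x : E) :
    ‖(-((μ * η) • v) - η • G (x + (η * (1 - μ * η)) • v)) - η • (-(μ • v) - G x)
        - η ^ 2 • -fderiv ℝ G x v‖
      ≤ (Lh * (1 + μ) ^ 2 * ‖v‖ ^ 2 + μ * ‖fderiv ℝ G x v‖) * η ^ 3 := by
  set s := η * (1 - μ * η)
  have hs : |s| ≤ (1 + μ) * η := by
    rw [abs_mul, abs_of_nonneg hη0, mul_comm]
    exact mul_le_mul_of_nonneg_right (abs_le.2 ⟨by nlinarith, by nlinarith⟩) hη0
  have taylor := norm_sub_sub_fderiv_le_of_lipschitz_fderiv hG hLh0 hLh x (s • v)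
  have hsv : ‖s • v‖ ^ 2 ≤ (1 + μ) ^ 2 * ‖v‖ ^ 2 * η ^ 2 := by
    rw [norm_smul, Real.norm_eq_abs, mul_pow]
    nlinarith [pow_le_pow_left₀ (abs_nonneg s) hs 2, sq_nonneg ‖v‖]
  have hsplit : (-((μ * η) • v) - η • G (x + s • v)) - η • (-(μ • v) - G x)
        - η ^ 2 • -fderiv ℝ G x v
      = -(η • (G (x + s • v) - G x - fderiv ℝ G x (s • v))) + (μ * η ^ 3) • fderiv ℝ G x v := by
    rw [(fderiv ℝ G x).map_smul]; module
  rw [hsplit]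
  calc _ ≤ η * (Lh * ‖s • v‖ ^ 2) + μ * η ^ 3 * ‖fderiv ℝ G x v‖ := by
        refine (norm_add_le _ _).trans (add_le_add ?_ ?_)
        · rw [norm_neg, norm_smul, Real.norm_eq_abs, abs_of_nonneg hη0]
          exact mul_le_mul_of_nonneg_left taylor hη0
        · rw [norm_smul, Real.norm_eq_abs, abs_of_nonneg (by positivity)]
    _ ≤ _ := by nlinarith [mul_le_mul_of_nonneg_left hsv (mul_nonneg hη0 hLh0)]

theorem norm_nesterov_position_drift_sub_le {A : ℝ} (hA : 0 ≤ A) (hη0 : 0 ≤ η) (hη1 : η ≤ 1)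
    {v g w m : E} (hm : ‖m - η • (-(μ • v) - g) - η ^ 2 • -w‖ ≤ A * η ^ 3) :
    ‖η • (v + m) - η • v - η ^ 2 • (-(μ • v) - g)‖ ≤ (A + ‖w‖) * η ^ 3 := by
  have hsplit : η • (v + m) - η • v - η ^ 2 • (-(μ • v) - g)
      = η • (m - η • (-(μ • v) - g) - η ^ 2 • -w) - η ^ 3 • w := by module
  rw [hsplit]
  refine (norm_sub_le _ _).trans ?_
  rw [norm_smul, norm_smul, Real.norm_eq_abs, Real.norm_eq_abs, abs_of_nonneg hη0,
    abs_of_nonneg (by positivity)]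
  have hη4 : η ^ 4 ≤ η ^ 3 := pow_le_pow_of_le_one hη0 hη1 (by norm_num)
  nlinarith [mul_le_mul_of_nonneg_left hm hη0, mul_le_mul_of_nonneg_left hη4 hA]

end NesterovDrift

theorem exists_growth_bound_of_lipschitz {E F : Type*} [NormedAddCommGroup E]
    [NormedSpace ℝ E] [NormedAddCommGroup F] [NormedSpace ℝ F] {H : E → E →L[ℝ] F} {L : ℝ}
    (hL0 : 0 ≤ L) (hL : ∀ x y, ‖H x - H y‖ ≤ L * ‖x - y‖) {a b : ℝ} (ha : 0 ≤ a) (hb : 0 ≤ b) :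
    ∃ c > 0, ∀ v x, |a * ‖v‖ ^ 2 + b * ‖H x v‖| ≤ c * (1 + (‖v‖ ^ 2 + ‖x‖ ^ 2)) := by
  refine ⟨a + b * (‖H 0‖ + L) + 1, by positivity, fun v x => ?_⟩
  have hHx : ‖H x‖ ≤ ‖H 0‖ + L * ‖x‖ := by
    linarith [norm_sub_norm_le (H x) (H 0), sub_zero x ▸ hL x 0]
  have hHxv : ‖H x v‖ ≤ (‖H 0‖ + L * ‖x‖) * ‖v‖ :=
    (H x).le_opNorm_of_le le_rfl |>.trans (mul_le_mul_of_nonneg_right hHx (norm_nonneg v))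
  have hv : ‖v‖ ≤ 1 + (‖v‖ ^ 2 + ‖x‖ ^ 2) := by nlinarith [sq_nonneg (‖v‖ - 1), sq_nonneg ‖x‖]
  have hxv : ‖x‖ * ‖v‖ ≤ 1 + (‖v‖ ^ 2 + ‖x‖ ^ 2) := by nlinarith [sq_nonneg (‖v‖ - ‖x‖)]
  rw [abs_of_nonneg (by positivity)]
  nlinarith [mul_le_mul_of_nonneg_left hHxv hb,
    mul_le_mul_of_nonneg_left (mul_le_mul_of_nonneg_left hv (norm_nonneg (H 0))) hb,
    mul_le_mul_of_nonneg_left (mul_le_mul_of_nonneg_left hxv hL0) hb]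

theorem Real.sqrt_sq_add_sq_le_add {a b A B : ℝ} (ha : 0 ≤ a) (hb : 0 ≤ b) (hA : a ≤ A)
    (hB : b ≤ B) : √(a ^ 2 + b ^ 2) ≤ A + B :=
  Real.sqrt_le_iff.2 ⟨by linarith, by nlinarith⟩

theorem snag_one_step_first_moment_expansion_general
    {d : ℕ} {Ω : Type*} [MeasurableSpace Ω] (P : Measure Ω) [IsProbabilityMeasure P]
    {Γ : Type*} [MeasurableSpace Γ] (γ : Ω → Γ)
    (f : Γ → EuclideanSpace ℝ (Fin d) → ℝ)
    (hfint : ∀ x, Integrable (fun ω => f (γ ω) x) P)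
    (hfC1 : ∀ᵐ ω ∂P, ContDiff ℝ 1 (f (γ ω)))
    (Lγ : Ω → ℝ)
    (hLip : ∀ᵐ ω ∂P, ∀ x y, ‖gradient (f (γ ω)) x - gradient (f (γ ω)) y‖ ≤ Lγ ω * ‖x - y‖)
    (hLγ2 : Integrable (fun ω => (Lγ ω) ^ 2) P)
    (F : EuclideanSpace ℝ (Fin d) → ℝ)
    (hFC2 : ContDiff ℝ 2 F)
    (hFgrad : ∀ x, gradient F x = ∫ ω, gradient (f (γ ω)) x ∂P)
    (hHessLip : ∃ Lh : ℝ, 0 ≤ Lh ∧ ∀ x y,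
      ‖fderiv ℝ (gradient F) x - fderiv ℝ (gradient F) y‖ ≤ Lh * ‖x - y‖)
    (μ : ℝ) (hμ : 0 < μ)
    (Δv Δx : ℝ → EuclideanSpace ℝ (Fin d) → EuclideanSpace ℝ (Fin d) → Ω →
      EuclideanSpace ℝ (Fin d))
    (hΔv : ∀ η v x ω, Δv η v x ω =
      -((μ * η) • v) - η • gradient (f (γ ω)) (x + (η * (1 - μ * η)) • v))
    (hΔx : ∀ η v x ω, Δx η v x ω = η • (v + Δv η v x ω)) :
    ∃ K : EuclideanSpace ℝ (Fin d) → EuclideanSpace ℝ (Fin d) → ℝ,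
      (∃ c₁ : ℝ, ∃ c₂ : ℕ, 0 < c₁ ∧ 0 < c₂ ∧
        ∀ v x, |K v x| ≤ c₁ * (1 + (‖v‖ ^ 2 + ‖x‖ ^ 2) ^ c₂)) ∧
      ∀ η : ℝ, 0 < η → η < 1 → ∀ v x,
        Real.sqrt
          (‖(∫ ω, Δv η v x ω ∂P) - η • (-(μ • v) - gradient F x)
              - (η ^ 2) • (-(fderiv ℝ (gradient F) x v))‖ ^ 2 +
           ‖(∫ ω, Δx η v x ω ∂P) - η • v - (η ^ 2) • (-(μ • v) - gradient F x)‖ ^ 2)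
          ≤ K v x * η ^ 3 := by
  obtain ⟨Lh, hLh0, hLh⟩ := hHessLip
  have hLip' : ∀ᵐ ω ∂P, ∀ z w,
      ‖gradient (f (γ ω)) z - gradient (f (γ ω)) w‖ ≤ (1 + Lγ ω ^ 2) * ‖z - w‖ := by
    filter_upwards [hLip] with ω hω z w
    exact (hω z w).trans
      (mul_le_mul_of_nonneg_right (by nlinarith [sq_nonneg (Lγ ω - 1)]) (norm_nonneg _))
  have hgrad_int : ∀ y, Integrable (fun ω => gradient (f (γ ω)) y) P :=
    integrable_gradient_apply_of_lipschitz hfint (hfC1.mono fun ω h => h.differentiable one_ne_zero)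
      (fun ω => add_nonneg zero_le_one (sq_nonneg _)) ((integrable_const 1).add hLγ2) hLip'
  have hΔv_int : ∀ η v x, Integrable (Δv η v x) P := fun η v x => by
    rw [funext (hΔv η v x)]
    exact (integrable_const _).sub ((hgrad_int _).fun_smul η)
  have hEΔv : ∀ η v x, ∫ ω, Δv η v x ω ∂P
      = -((μ * η) • v) - η • gradient F (x + (η * (1 - μ * η)) • v) := fun η v x => by
    simp_rw [hΔv]
    rw [integral_sub (integrable_const _) ((hgrad_int _).fun_smul η), integral_smul, ← hFgrad]
    simp
  have hEΔx : ∀ η v x, ∫ ω, Δx η v x ω ∂P = η • (v + ∫ ω, Δv η v x ω ∂P) := fun η v x => by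
    simp_rw [hΔx]
    rw [integral_smul, integral_add (integrable_const v) (hΔv_int η v x)]
    simp
  obtain ⟨c, hc, hgrowth⟩ := exists_growth_bound_of_lipschitz hLh0 hLh
    (a := 2 * (Lh * (1 + μ) ^ 2)) (b := 2 * μ + 1) (by positivity) (by positivity)
  refine ⟨fun v x => 2 * (Lh * (1 + μ) ^ 2) * ‖v‖ ^ 2 + (2 * μ + 1) * ‖fderiv ℝ (gradient F) x v‖,
    ⟨c, 1, hc, one_pos, by simpa using hgrowth⟩, fun η hη0 hη1 v x => ?_⟩
  have hvel := norm_nesterov_velocity_drift_sub_le (differentiable_gradient_of_contDiff_two hFC2)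
    hLh0 hLh hμ.le hη0.le hη1.le v x
  have hpos := norm_nesterov_position_drift_sub_le (by positivity) hη0.le hη1.le hvel
  rw [hEΔx, hEΔv]
  convert Real.sqrt_sq_add_sq_le_add (norm_nonneg _) (norm_nonneg _) hvel hpos using 1
  ring

/-- First-moment expansion for the one-step stochastic Nesterov accelerated
gradient increment `Δ = (v₁ − v, x₁ − x)` with `v₁ = v − μηv − η∇f_γ(x + η(1−μη)v)`,
`x₁ = x + ηv₁`: there is a polynomial-growth function `K(v, x)`, independent of `η ∈ (0,1)`,
with `|E Δ − η(−μv − ∇f(x), v) − η²(−∇²f(x)v, −μv − ∇f(x))| ≤ K(v,x) η³`. -/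
theorem snag_one_step_first_moment_expansion
    {d : ℕ} {Ω : Type*} [MeasurableSpace Ω] (P : Measure Ω) [IsProbabilityMeasure P]
    {Γ : Type*} [MeasurableSpace Γ] (γ : Ω → Γ) (hγ : Measurable γ)
    (f : Γ → EuclideanSpace ℝ (Fin d) → ℝ)
    (hfmeas : Measurable (Function.uncurry f))
    (hfint : ∀ x, Integrable (fun ω => f (γ ω) x) P)
    (hfC1 : ∀ᵐ ω ∂P, ContDiff ℝ 1 (f (γ ω)))
    (Lγ : Ω → ℝ) (hLγmeas : Measurable Lγ)
    (hLip : ∀ᵐ ω ∂P, ∀ x y, ‖gradient (f (γ ω)) x - gradient (f (γ ω)) y‖ ≤ Lγ ω * ‖x - y‖)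
    (hLγ2 : Integrable (fun ω => (Lγ ω) ^ 2) P)
    (F : EuclideanSpace ℝ (Fin d) → ℝ)
    (hF : ∀ x, F x = ∫ ω, f (γ ω) x ∂P)
    (hFC2 : ContDiff ℝ 2 F)
    (hFgrad : ∀ x, gradient F x = ∫ ω, gradient (f (γ ω)) x ∂P)
    (hHessLip : ∃ Lh : ℝ, 0 ≤ Lh ∧ ∀ x y,
      ‖fderiv ℝ (gradient F) x - fderiv ℝ (gradient F) y‖ ≤ Lh * ‖x - y‖)
    (μ : ℝ) (hμ : 0 < μ)
    (Δv Δx : ℝ → EuclideanSpace ℝ (Fin d) → EuclideanSpace ℝ (Fin d) → Ω →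
      EuclideanSpace ℝ (Fin d))
    (hΔv : ∀ η v x ω, Δv η v x ω =
      -((μ * η) • v) - η • gradient (f (γ ω)) (x + (η * (1 - μ * η)) • v))
    (hΔx : ∀ η v x ω, Δx η v x ω = η • (v + Δv η v x ω)) :
    ∃ K : EuclideanSpace ℝ (Fin d) → EuclideanSpace ℝ (Fin d) → ℝ,
      (∃ c₁ : ℝ, ∃ c₂ : ℕ, 0 < c₁ ∧ 0 < c₂ ∧
        ∀ v x, |K v x| ≤ c₁ * (1 + (‖v‖ ^ 2 + ‖x‖ ^ 2) ^ c₂)) ∧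
      ∀ η : ℝ, 0 < η → η < 1 → ∀ v x,
        Real.sqrt
          (‖(∫ ω, Δv η v x ω ∂P) - η • (-(μ • v) - gradient F x)
              - (η ^ 2) • (-(fderiv ℝ (gradient F) x v))‖ ^ 2 +
           ‖(∫ ω, Δx η v x ω ∂P) - η • v - (η ^ 2) • (-(μ • v) - gradient F x)‖ ^ 2)
          ≤ K v x * η ^ 3 :=
  snag_one_step_first_moment_expansion_general P γ f hfint hfC1 Lγ hLip hLγ2 F hFC2 hFgrad hHessLip
    μ hμ Δv Δx hΔv hΔx
end

section
/- Let H be a real symmetric positive-definite d×d matrix and μ ∈ ℝ. Let A be the real 2d×2d block matrix A = [ (μI, H) ; (−I, 0) ]. Then the set of complex eigenvalues of A equals { (μ + s·√(μ² − 4κ)) / 2 : κ an eigenvalue of H, s ∈ {+1, −1} }, where √ denotes a complex square root (so that for μ² < 4κ the two values are (μ ± i√(4κ − μ²))/2). -/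
/-!
Since the lower-left block of `zI - A` is the identity, a Schur-complement computation gives
`det (zI - A) = 0 ↔ det ((μz - z²)I - H) = 0`. Hence `z` is an eigenvalue of `A` exactly when
`μz - z²` is an eigenvalue `κ` of `H`, and the roots of `z² - μz + κ = 0` are `(μ ± √(μ² - 4κ))/2`.
-/

open Matrix Polynomial

section BlockCharpoly

variable {n R : Type*} [Fintype n] [DecidableEq n] [CommRing R]

theorem det_fromBlocks_one₂₁_eq_zero_iff (A B D : Matrix n n R) :
    (fromBlocks A B 1 D).det = 0 ↔ (B - A * D).det = 0 := by
  have hswap : fromBlocks A B 1 D =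
      (fromBlocks B A D 1).submatrix id (Equiv.sumComm n n : Equiv.Perm (n ⊕ n)) :=
    (fromBlocks_submatrix_sum_swap_right B A D 1 id).symm
  rw [hswap, det_permute', det_fromBlocks_one₂₂]
  exact ((Equiv.Perm.sign _).isUnit.map (Int.castRingHom R)).mul_right_eq_zero

theorem isRoot_charpoly_fromBlocks_smul_one_neg_one_zero_iff (M : Matrix n n R) (μ z : R) :
    (fromBlocks (μ • 1) M (-1) 0).charpoly.IsRoot z ↔ M.charpoly.IsRoot (μ * z - z ^ 2) := by
  have hblocks : scalar (n ⊕ n) z - fromBlocks (μ • 1) M (-1) 0 =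
      fromBlocks (scalar n (z - μ)) (-M) 1 (scalar n z) := by
    simp only [scalar_apply, ← smul_one_eq_diagonal, ← fromBlocks_one, fromBlocks_smul,
      sub_eq_add_neg, fromBlocks_neg, fromBlocks_add, add_smul, neg_smul]
    simp
  have hschur : -M - scalar n (z - μ) * scalar n z = scalar n (μ * z - z ^ 2) - M := by
    rw [← map_mul, show μ * z - z ^ 2 = -((z - μ) * z) by ring, map_neg]
    abel
  rw [IsRoot, IsRoot, eval_charpoly, eval_charpoly, hblocks, det_fromBlocks_one₂₁_eq_zero_iff,
    hschur]

end BlockCharpoly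

theorem Matrix.IsHermitian.isRoot_charpoly_map_iff {n K : Type*} [Fintype n] [DecidableEq n]
    [CommRing K] [IsDomain K] [Algebra ℝ K] {H : Matrix n n ℝ} (hH : H.IsHermitian) (c : K) :
    (H.map (algebraMap ℝ K)).charpoly.IsRoot c ↔ ∃ i, c = algebraMap ℝ K (hH.eigenvalues i) := by
  rw [charpoly_map, hH.charpoly_eq, Polynomial.map_prod, IsRoot, eval_prod,
    Finset.prod_eq_zero_iff]
  simp [sub_eq_zero]

theorem mul_sub_sq_eq_iff_exists_sq_eq {K : Type*} [Field K] [NeZero (2 : K)]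
    (μ z κ : K) : μ * z - z ^ 2 = κ ↔ ∃ w, w ^ 2 = μ ^ 2 - 4 * κ ∧ z = (μ + w) / 2 := by
  constructor
  · rintro rfl
    exact ⟨2 * z - μ, by ring, by field_simp; ring⟩
  · rintro ⟨w, hw, rfl⟩
    field_simp
    linear_combination -hw

/-- The complex eigenvalues of the block matrix `A = [(μI, H); (−I, 0)]`,
for `H` real symmetric positive definite, are exactly `(μ ± √(μ² − 4κ))/2` as `κ` ranges over
the eigenvalues of `H` (with `√` a complex square root). -/
theorem msgd_sme_drift_matrix_eigenvalues
    {d : ℕ} (H : Matrix (Fin d) (Fin d) ℝ) (hH : H.PosDef) (μ : ℝ) :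
    {z : ℂ | (((Matrix.fromBlocks (μ • (1 : Matrix (Fin d) (Fin d) ℝ)) H
        (-(1 : Matrix (Fin d) (Fin d) ℝ)) 0).map (algebraMap ℝ ℂ)).charpoly).IsRoot z} =
    {z : ℂ | ∃ i : Fin d, ∃ s : ℝ, (s = 1 ∨ s = -1) ∧ ∃ w : ℂ,
      w ^ 2 = (μ : ℂ) ^ 2 - 4 * (hH.isHermitian.eigenvalues i : ℂ) ∧
      z = ((μ : ℂ) + (s : ℂ) * w) / 2} := by
  ext z
  have hA : (fromBlocks (μ • 1) H (-1) 0 : Matrix (Fin d ⊕ Fin d) (Fin d ⊕ Fin d) ℝ).map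
        (algebraMap ℝ ℂ) =
      fromBlocks ((μ : ℂ) • 1) (H.map (algebraMap ℝ ℂ)) (-1) 0 := by
    simp [fromBlocks_map, Matrix.map_smul', Matrix.map_neg]
  simp only [Set.mem_ofPred_eq, hA, isRoot_charpoly_fromBlocks_smul_one_neg_one_zero_iff,
    hH.isHermitian.isRoot_charpoly_map_iff]
  refine exists_congr fun i => ?_
  rw [Complex.coe_algebraMap, mul_sub_sq_eq_iff_exists_sq_eq]
  constructor
  · rintro ⟨w, hw, rfl⟩
    exact ⟨1, Or.inl rfl, w, hw, by simp⟩
  · rintro ⟨s, hs, w, hw, rfl⟩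
    refine ⟨s * w, ?_, rfl⟩
    rcases hs with rfl | rfl <;> simpa using hw
end

section
/- Let H be a real symmetric positive-definite d×d matrix and μ > 0. Let A be the real 2d×2d block matrix A = [ (μI, H) ; (−I, 0) ]. Then every complex eigenvalue of A has strictly positive real part. -/
/-!
If `(x, y)` is an eigenvector of `A` for the eigenvalue `z`, the second block row gives
`x = -z y`, so `y ≠ 0`, and the first block row becomes `H y = z (μ - z) y`. Viewed over `ℂ`,
`H` is still positive definite, so `z (μ - z)` is a positive real number. Its imaginary part
`Im z (μ - 2 Re z)` vanishes, so either `Re z = μ / 2`, or `z` is real with `z (μ - z) > 0`,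
that is `0 < z < μ`.
-/

open Matrix Polynomial
open scoped ComplexOrder

namespace Matrix

variable {n : Type*} [Fintype n]

lemma exists_mulVec_eq_smul_of_isRoot_charpoly {K : Type*} [Field K] [DecidableEq n]
    {M : Matrix n n K} {z : K} (hz : M.charpoly.IsRoot z) : ∃ v ≠ 0, M *ᵥ v = z • v := by
  rw [IsRoot.def, eval_charpoly, ← exists_mulVec_eq_zero_iff] at hz
  obtain ⟨v, hv, hMv⟩ := hz
  refine ⟨v, hv, ?_⟩
  rw [sub_mulVec, sub_eq_zero] at hMv
  simp [scalar_apply, ← hMv]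

lemma fromBlocks_mulVec_eq_smul {R : Type*} [CommRing R] [DecidableEq n] {a z : R}
    {B : Matrix n n R} {x y : n → R}
    (h : fromBlocks (a • 1) B (-1) 0 *ᵥ Sum.elim x y = z • Sum.elim x y) :
    x = -(z • y) ∧ B *ᵥ y = (z * (a - z)) • y := by
  have hsmul : z • Sum.elim x y = Sum.elim (z • x) (z • y) := by ext (i | i) <;> rfl
  rw [fromBlocks_mulVec, hsmul] at h
  have h₁ := congrArg (· ∘ Sum.inl) h
  have h₂ := congrArg (· ∘ Sum.inr) h
  simp only [Sum.elim_comp_inl, Sum.elim_comp_inr, smul_mulVec, one_mulVec,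
    neg_mulVec, zero_mulVec, add_zero] at h₁ h₂
  have hx : x = -(z • y) := by rw [← h₂, neg_neg]
  refine ⟨hx, ?_⟩
  rw [hx] at h₁
  linear_combination (norm := module) h₁

lemma IsSymm.star_dotProduct_map_mulVec {M : Matrix n n ℝ} (hM : M.IsSymm) (y : n → ℂ) :
    star y ⬝ᵥ M.map (algebraMap ℝ ℂ) *ᵥ y =
      ((Complex.re ∘ y) ⬝ᵥ M *ᵥ (Complex.re ∘ y) +
        (Complex.im ∘ y) ⬝ᵥ M *ᵥ (Complex.im ∘ y) : ℝ) := by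
  have hcross : (Complex.re ∘ y) ⬝ᵥ M *ᵥ (Complex.im ∘ y) =
      (Complex.im ∘ y) ⬝ᵥ M *ᵥ (Complex.re ∘ y) := by
    rw [dotProduct_mulVec, ← mulVec_transpose, hM.eq, dotProduct_comm]
  apply Complex.ext
  · simp [dotProduct, mulVec, Complex.re_sum, Finset.mul_sum, ← Finset.sum_add_distrib]
  · simp only [dotProduct, mulVec, Finset.mul_sum, Function.comp_apply] at hcross
    simp [dotProduct, mulVec, Complex.im_sum, Finset.mul_sum, Finset.sum_add_distrib, hcross]

lemma PosDef.map_algebraMap_complex {M : Matrix n n ℝ} (hM : M.PosDef) :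
    (M.map (algebraMap ℝ ℂ)).PosDef := by
  refine .of_dotProduct_mulVec_pos (hM.isHermitian.map _ fun x => by simp) fun y hy => ?_
  rw [(isHermitian_iff_isSymm.mp hM.isHermitian).star_dotProduct_map_mulVec, Complex.zero_lt_real]
  have hquad (v : n → ℝ) : 0 ≤ v ⬝ᵥ M *ᵥ v := hM.posSemidef.dotProduct_mulVec_nonneg v
  by_cases hre : Complex.re ∘ y = 0
  · have him : Complex.im ∘ y ≠ 0 := fun him =>
      hy (funext fun i => Complex.ext (congrFun hre i) (congrFun him i))
    exact add_pos_of_nonneg_of_pos (hquad _) (hM.dotProduct_mulVec_pos him)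
  · exact add_pos_of_pos_of_nonneg (hM.dotProduct_mulVec_pos hre) (hquad _)

lemma PosDef.pos_of_mulVec_eq_smul {𝕜 : Type*} [RCLike 𝕜] {M : Matrix n n 𝕜} (hM : M.PosDef)
    {v : n → 𝕜} (hv : v ≠ 0) {l : 𝕜} (hl : M *ᵥ v = l • v) : 0 < l := by
  have h : 0 < l * (star v ⬝ᵥ v) := by
    simpa [hl, mul_comm] using hM.dotProduct_mulVec_pos hv
  exact (pos_iff_pos_of_mul_pos h).mpr (dotProduct_star_self_pos_iff.mpr hv)

end Matrix

lemma Complex.re_pos_of_mul_sub_pos {μ : ℝ} (hμ : 0 < μ) {z : ℂ} (h : 0 < z * (μ - z)) :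
    0 < z.re := by
  obtain ⟨hre, him⟩ := Complex.pos_iff.mp h
  simp only [mul_re, sub_re, ofReal_re, sub_im, ofReal_im, mul_im] at hre him
  by_contra! hz
  have him0 : z.im = 0 := by
    have : z.im * (μ - 2 * z.re) = 0 := by linear_combination -him
    exact (mul_eq_zero.mp this).resolve_right (by linarith)
  rw [him0] at hre
  nlinarith

/-- For `H` real symmetric positive definite and `μ > 0`, every complex
eigenvalue of the block matrix `A = [(μI, H); (−I, 0)]` has strictly positive real part. -/
theorem msgd_sme_drift_matrix_eigenvalues_pos_re
    {d : ℕ} (H : Matrix (Fin d) (Fin d) ℝ) (hH : H.PosDef) (μ : ℝ) (hμ : 0 < μ) :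
    ∀ z : ℂ, (((Matrix.fromBlocks (μ • (1 : Matrix (Fin d) (Fin d) ℝ)) H
        (-(1 : Matrix (Fin d) (Fin d) ℝ)) 0).map (algebraMap ℝ ℂ)).charpoly).IsRoot z →
      0 < z.re := by
  intro z hz
  obtain ⟨v, hv, hAv⟩ := exists_mulVec_eq_smul_of_isRoot_charpoly hz
  rw [fromBlocks_map, Matrix.map_smul' _ _ _ (map_mul _), Matrix.map_neg _ (map_neg _),
    Matrix.map_one _ (map_zero _) (map_one _), Matrix.map_zero _ (map_zero _),
    ← Sum.elim_comp_inl_inr v] at hAv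
  obtain ⟨hx, hy⟩ := fromBlocks_mulVec_eq_smul hAv
  have hy0 : v ∘ Sum.inr ≠ 0 := by
    intro hy0
    rw [hy0, smul_zero, neg_zero] at hx
    exact hv (by rw [← Sum.elim_comp_inl_inr v, hx, hy0, Sum.elim_zero_zero])
  exact Complex.re_pos_of_mul_sub_pos hμ (hH.map_algebraMap_complex.pos_of_mulVec_eq_smul hy0 hy)
end

section
/- Let H be a real symmetric positive-definite d×d matrix and let λ_min > 0 be its smallest eigenvalue. For μ > 0 define g(μ) := min over the eigenvalues κ of H of the minimum of Re z over the two complex roots z of the quadratic z² − μz + κ = 0. Then g(μ) ≤ √λ_min for every μ > 0, and g(μ) = √λ_min if and only if μ = 2√λ_min. In particular, sup_{μ>0} g(μ) is attained uniquely at μ* = 2√λ_min with optimal value √λ_min. -/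
/-!
A root of `z² − μz + κ` is either real or has real part `μ/2`. For the smallest eigenvalue
`m` there is always a root with real part at most `√m`: the real part `μ/2` of the complex
pair when `μ ≤ 2√m`, the smaller real root `(μ − √(μ² − 4m))/2` otherwise, and it is strictly
below `√m` unless `μ = 2√m`. At `μ = 2√m` every root of every `z² − 2√m z + κ` with `κ ≥ m`
has real part exactly `√m`, since a real root `r` satisfies `(r − √m)² = m − κ ≤ 0`.
-/

open Complex

def quadraticRootsRe {ι : Type*} (κ : ι → ℝ) (μ : ℝ) : Set ℝ :=
  {r | ∃ i, ∃ z : ℂ, z ^ 2 - (μ : ℂ) * z + (κ i : ℂ) = 0 ∧ r = z.re}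

section QuadraticRoot

variable {μ κ : ℝ} {z : ℂ}

lemma quadratic_root_real_or_re_eq_half (hz : z ^ 2 - (μ : ℂ) * z + (κ : ℂ) = 0) :
    z.re ^ 2 - μ * z.re + κ = 0 ∨ z.re = μ / 2 := by
  have him : z.im * (2 * z.re - μ) = 0 := by
    have := congrArg Complex.im hz
    simp only [pow_two, sub_im, add_im, mul_im, ofReal_re, ofReal_im, zero_im] at this
    linarith
  have hre : z.re ^ 2 - z.im ^ 2 - μ * z.re + κ = 0 := by
    have := congrArg Complex.re hz
    simp only [pow_two, sub_re, add_re, mul_re, ofReal_re, ofReal_im, zero_re] at this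
    linarith
  rcases mul_eq_zero.mp him with h | h
  · left
    simpa [h] using hre
  · right
    linarith

lemma re_pos_of_quadratic_root (hμ : 0 < μ) (hκ : 0 < κ)
    (hz : z ^ 2 - (μ : ℂ) * z + (κ : ℂ) = 0) : 0 < z.re := by
  rcases quadratic_root_real_or_re_eq_half hz with h | h
  · nlinarith
  · linarith

lemma re_eq_sqrt_of_quadratic_root {m : ℝ} (hm : 0 ≤ m) (hmκ : m ≤ κ) (hμ : μ = 2 * √m)
    (hz : z ^ 2 - (μ : ℂ) * z + (κ : ℂ) = 0) : z.re = √m := by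
  have hsq : √m ^ 2 = m := Real.sq_sqrt hm
  rcases quadratic_root_real_or_re_eq_half hz with h | h
  · subst hμ
    have hdev : (z.re - √m) ^ 2 = m - κ := by linear_combination h + hsq
    have : (z.re - √m) ^ 2 = 0 := le_antisymm (by linarith) (sq_nonneg _)
    linarith [pow_eq_zero_iff two_ne_zero |>.mp this]
  · rw [h, hμ]
    ring

lemma exists_quadratic_root_re_eq_half (h : μ ^ 2 ≤ 4 * κ) :
    ∃ z : ℂ, z ^ 2 - (μ : ℂ) * z + (κ : ℂ) = 0 ∧ z.re = μ / 2 := by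
  set t := √(κ - μ ^ 2 / 4)
  have ht : ((t ^ 2 : ℝ) : ℂ) = ((κ - μ ^ 2 / 4 : ℝ) : ℂ) := congrArg _ (Real.sq_sqrt (by linarith))
  refine ⟨(μ / 2 : ℝ) + I * t, ?_, by simp⟩
  push_cast at ht ⊢
  linear_combination (t : ℂ) ^ 2 * I_sq - ht

lemma exists_quadratic_root_re_eq_sub_sqrt (h : 4 * κ ≤ μ ^ 2) :
    ∃ z : ℂ, z ^ 2 - (μ : ℂ) * z + (κ : ℂ) = 0 ∧ z.re = (μ - √(μ ^ 2 - 4 * κ)) / 2 := by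
  set s := √(μ ^ 2 - 4 * κ)
  have hs : s ^ 2 = μ ^ 2 - 4 * κ := Real.sq_sqrt (by linarith)
  refine ⟨((μ - s) / 2 : ℝ), ?_, by simp⟩
  have hroot : ((μ - s) / 2) ^ 2 - μ * ((μ - s) / 2) + κ = 0 := by linear_combination hs / 4
  exact_mod_cast congrArg ((↑) : ℝ → ℂ) hroot

lemma exists_quadratic_root_re_lt_sqrt (hκ : 0 < κ) (hμ : μ ≠ 2 * √κ) :
    ∃ z : ℂ, z ^ 2 - (μ : ℂ) * z + (κ : ℂ) = 0 ∧ z.re < √κ := by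
  have hsq : √κ ^ 2 = κ := Real.sq_sqrt hκ.le
  have hpos : 0 < √κ := Real.sqrt_pos.mpr hκ
  rcases le_or_gt (μ ^ 2) (4 * κ) with h | h
  · obtain ⟨z, hz, hre⟩ := exists_quadratic_root_re_eq_half h
    have hle : μ ≤ 2 * √κ := by nlinarith
    exact ⟨z, hz, by rw [hre]; linarith [lt_of_le_of_ne hle hμ]⟩
  · obtain ⟨z, hz, hre⟩ := exists_quadratic_root_re_eq_sub_sqrt h.le
    refine ⟨z, hz, ?_⟩
    rw [hre, div_lt_iff₀ two_pos, sub_lt_comm]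
    rcases le_or_gt μ (2 * √κ) with hμle | hμgt
    · linarith [Real.sqrt_pos.mpr (sub_pos.mpr h)]
    · exact Real.lt_sqrt (by linarith) |>.mpr (by nlinarith)

end QuadraticRoot

section QuadraticRootsRe

variable {ι : Type*} {κ : ι → ℝ} {μ m : ℝ}

lemma bddBelow_quadraticRootsRe (hκ : ∀ i, 0 < κ i) (hμ : 0 < μ) :
    BddBelow (quadraticRootsRe κ μ) := by
  refine ⟨0, ?_⟩
  rintro r ⟨i, z, hz, rfl⟩
  exact (re_pos_of_quadratic_root hμ (hκ i) hz).le

lemma sInf_quadraticRootsRe_lt_sqrt (hκ : ∀ i, 0 < κ i) (hμ : 0 < μ) (hm : ∃ i, κ i = m)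
    (hμm : μ ≠ 2 * √m) : sInf (quadraticRootsRe κ μ) < √m := by
  obtain ⟨i, rfl⟩ := hm
  obtain ⟨z, hz, hre⟩ := exists_quadratic_root_re_lt_sqrt (hκ i) hμm
  exact (csInf_le (bddBelow_quadraticRootsRe hκ hμ) ⟨i, z, hz, rfl⟩).trans_lt hre

lemma quadraticRootsRe_eq_singleton_sqrt (hm : 0 ≤ m) (hle : ∀ i, m ≤ κ i) (hmem : ∃ i, κ i = m)
    (hμ : μ = 2 * √m) : quadraticRootsRe κ μ = {√m} := by
  refine Set.eq_singleton_iff_unique_mem.mpr ⟨?_, ?_⟩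
  · obtain ⟨i, rfl⟩ := hmem
    refine ⟨i, √(κ i), ?_, by simp⟩
    have hsq : ((√(κ i) : ℝ) : ℂ) ^ 2 = κ i := by exact_mod_cast Real.sq_sqrt hm
    rw [hμ]
    push_cast
    linear_combination -hsq
  · rintro r ⟨i, z, hz, rfl⟩
    exact re_eq_sqrt_of_quadratic_root hm (hle i) hμ hz

end QuadraticRootsRe

theorem msgd_optimal_momentum_general
    {d : ℕ} (H : Matrix (Fin d) (Fin d) ℝ) (hH : H.PosDef)
    (lammin : ℝ)
    (hlammin_le : ∀ i : Fin d, lammin ≤ hH.isHermitian.eigenvalues i)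
    (hlammin_mem : ∃ i : Fin d, hH.isHermitian.eigenvalues i = lammin)
    (g : ℝ → ℝ)
    (hg : ∀ μ : ℝ, g μ = sInf {r : ℝ | ∃ i : Fin d, ∃ z : ℂ,
      z ^ 2 - (μ : ℂ) * z + (hH.isHermitian.eigenvalues i : ℂ) = 0 ∧ r = z.re}) :
    (∀ μ : ℝ, 0 < μ → g μ ≤ Real.sqrt lammin) ∧
    (∀ μ : ℝ, 0 < μ → (g μ = Real.sqrt lammin ↔ μ = 2 * Real.sqrt lammin)) := by
  have hpos := hH.eigenvalues_pos
  have hlammin_pos : 0 < lammin := by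
    obtain ⟨i, hi⟩ := hlammin_mem
    exact hi ▸ hpos i
  have hg_optimal (μ : ℝ) (hμ : μ = 2 * √lammin) : g μ = √lammin := by
    rw [hg, ← quadraticRootsRe,
      quadraticRootsRe_eq_singleton_sqrt hlammin_pos.le hlammin_le hlammin_mem hμ, csInf_singleton]
  have hg_lt (μ : ℝ) (hμ : 0 < μ) (hne : μ ≠ 2 * √lammin) : g μ < √lammin :=
    hg μ ▸ sInf_quadraticRootsRe_lt_sqrt hpos hμ hlammin_mem hne
  refine ⟨fun μ hμ => ?_, fun μ hμ => ⟨fun heq => ?_, hg_optimal μ⟩⟩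
  · by_cases hne : μ = 2 * √lammin
    · exact (hg_optimal μ hne).le
    · exact (hg_lt μ hμ hne).le
  · by_contra hne
    exact (hg_lt μ hμ hne).ne heq

/-- For `H` real symmetric positive definite with smallest eigenvalue
`λ_min`, let `g(μ)` be the infimum, over the eigenvalues `κ` of `H` and over the two complex
roots `z` of `z² − μz + κ = 0`, of `Re z`. Then `g(μ) ≤ √λ_min` for every `μ > 0`, with
equality if and only if `μ = 2√λ_min`; hence `sup_{μ>0} g(μ)` is attained uniquely at
`μ* = 2√λ_min` with optimal value `√λ_min`. -/
theorem msgd_optimal_momentum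
    {d : ℕ} (H : Matrix (Fin d) (Fin d) ℝ) (hH : H.PosDef)
    (lammin : ℝ) (hlammin_pos : 0 < lammin)
    (hlammin_le : ∀ i : Fin d, lammin ≤ hH.isHermitian.eigenvalues i)
    (hlammin_mem : ∃ i : Fin d, hH.isHermitian.eigenvalues i = lammin)
    (g : ℝ → ℝ)
    (hg : ∀ μ : ℝ, g μ = sInf {r : ℝ | ∃ i : Fin d, ∃ z : ℂ,
      z ^ 2 - (μ : ℂ) * z + (hH.isHermitian.eigenvalues i : ℂ) = 0 ∧ r = z.re}) :
    (∀ μ : ℝ, 0 < μ → g μ ≤ Real.sqrt lammin) ∧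
    (∀ μ : ℝ, 0 < μ → (g μ = Real.sqrt lammin ↔ μ = 2 * Real.sqrt lammin)) :=
  msgd_optimal_momentum_general H hH lammin hlammin_le hlammin_mem g hg
end

section
/- Fix λ > 0 and let D := (0, ∞) \ {2√λ}. For μ ∈ D define L₊(μ) and L₋(μ) as the real parts of the two roots (μ ± √(μ² − 4λ))/2 of z² − μz + λ = 0 (so L₊(μ) = L₋(μ) = μ/2 when μ < 2√λ, and L±(μ) = (μ ± √(μ² − 4λ))/2 when μ > 2√λ), and set φ(μ) := (λ³ / |μ² − 4λ|) · ( 1/(2L₊(μ)) + 1/(2L₋(μ)) − 2·min( μ/(4λ), 1/μ ) ). Then φ is strictly decreasing on D: for all μ₁, μ₂ ∈ D with μ₁ < μ₂ one has φ(μ₁) > φ(μ₂). -/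
/-!
On both sides of critical damping the bracket equals `|μ² - 4λ| / (2λμ)`: below `2√λ` both real
parts are `μ/2`, above it the roots are real with sum `μ` and product `λ`, so
`1/(2L₊) + 1/(2L₋) = μ/(2λ)` by Vieta. The prefactor cancels the absolute value and the summand
collapses to `λ² / (2μ)`, which is strictly decreasing in `μ > 0`.
-/

open Real

section Bracket

variable {lam μ : ℝ}

lemma min_div_eq_left_of_sq_lt (hlam : 0 < lam) (hμ : 0 < μ) (h : μ ^ 2 < 4 * lam) :
    min (μ / (4 * lam)) (1 / μ) = μ / (4 * lam) :=
  min_eq_left <| by rw [div_le_div_iff₀ (by positivity) hμ]; nlinarith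

lemma min_div_eq_right_of_lt_sq (hlam : 0 < lam) (hμ : 0 < μ) (h : 4 * lam < μ ^ 2) :
    min (μ / (4 * lam)) (1 / μ) = 1 / μ :=
  min_eq_right <| by rw [div_le_div_iff₀ hμ (by positivity)]; nlinarith

lemma underdamped_bracket_eq (hlam : 0 < lam) (hμ : 0 < μ) (h : μ ^ 2 < 4 * lam) :
    1 / (2 * (μ / 2)) + 1 / (2 * (μ / 2)) - 2 * min (μ / (4 * lam)) (1 / μ) =
      |μ ^ 2 - 4 * lam| / (2 * lam * μ) := by
  rw [min_div_eq_left_of_sq_lt hlam hμ h, abs_of_neg (by linarith)]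
  field_simp
  ring

lemma one_div_two_mul_add_of_vieta {a b : ℝ} (hlam : lam ≠ 0) (hsum : a + b = μ)
    (hprod : a * b = lam) : 1 / (2 * a) + 1 / (2 * b) = μ / (2 * lam) := by
  have ha : a ≠ 0 := left_ne_zero_of_mul (hprod ▸ hlam)
  have hb : b ≠ 0 := right_ne_zero_of_mul (hprod ▸ hlam)
  rw [one_div_add_one_div (by positivity) (by positivity), ← hsum, ← hprod]
  ring

lemma overdamped_bracket_eq (hlam : 0 < lam) (hμ : 0 < μ) (h : 4 * lam < μ ^ 2) :
    1 / (2 * ((μ + √(μ ^ 2 - 4 * lam)) / 2)) + 1 / (2 * ((μ - √(μ ^ 2 - 4 * lam)) / 2)) -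
        2 * min (μ / (4 * lam)) (1 / μ) =
      |μ ^ 2 - 4 * lam| / (2 * lam * μ) := by
  have hr : √(μ ^ 2 - 4 * lam) ^ 2 = μ ^ 2 - 4 * lam := sq_sqrt (by linarith)
  rw [one_div_two_mul_add_of_vieta hlam.ne' (by ring) (by linear_combination -hr / 4),
    min_div_eq_right_of_lt_sq hlam hμ h, abs_of_pos (by linarith)]
  field_simp
  ring

end Bracket

lemma div_abs_mul_abs_div_eq {lam μ c : ℝ} (hlam : lam ≠ 0) (hμ : μ ≠ 0) (hc : c ≠ 0) :
    lam ^ 3 / |c| * (|c| / (2 * lam * μ)) = lam ^ 2 / (2 * μ) := by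
  have : |c| ≠ 0 := abs_ne_zero.2 hc
  field_simp

/-- For `λ > 0`, the asymptotic noise-induced loss summand
`φ(μ) = (λ³/|μ² − 4λ|)(1/(2L₊) + 1/(2L₋) − 2 min(μ/(4λ), 1/μ))`, where `L₊, L₋` are the real
parts of the roots of `z² − μz + λ = 0`, is strictly decreasing on `D = (0, ∞) \ {2√λ}`. -/
theorem msgd_asymptotic_noise_strictly_decreasing
    (lam : ℝ) (hlam : 0 < lam)
    (Lp Lm φ : ℝ → ℝ)
    (hLp : ∀ μ : ℝ, Lp μ =
      if μ < 2 * Real.sqrt lam then μ / 2 else (μ + Real.sqrt (μ ^ 2 - 4 * lam)) / 2)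
    (hLm : ∀ μ : ℝ, Lm μ =
      if μ < 2 * Real.sqrt lam then μ / 2 else (μ - Real.sqrt (μ ^ 2 - 4 * lam)) / 2)
    (hφ : ∀ μ : ℝ, φ μ = (lam ^ 3 / |μ ^ 2 - 4 * lam|) *
      (1 / (2 * Lp μ) + 1 / (2 * Lm μ) - 2 * min (μ / (4 * lam)) (1 / μ))) :
    ∀ μ₁ μ₂ : ℝ, 0 < μ₁ → μ₁ ≠ 2 * Real.sqrt lam → 0 < μ₂ → μ₂ ≠ 2 * Real.sqrt lam →
      μ₁ < μ₂ → φ μ₂ < φ μ₁ := by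
  have φ_eq : ∀ μ, 0 < μ → μ ≠ 2 * √lam → φ μ = lam ^ 2 / (2 * μ) := by
    intro μ hμ hcrit
    have hsqrt : √lam ^ 2 = lam := sq_sqrt hlam.le
    rw [hφ, hLp, hLm]
    rcases hcrit.lt_or_gt with hlt | hgt
    · have h : μ ^ 2 < 4 * lam := by nlinarith [sqrt_nonneg lam]
      rw [if_pos hlt, if_pos hlt, underdamped_bracket_eq hlam hμ h,
        div_abs_mul_abs_div_eq hlam.ne' hμ.ne' (by linarith)]
    · have h : 4 * lam < μ ^ 2 := by nlinarith [sqrt_nonneg lam]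
      rw [if_neg hgt.not_gt, if_neg hgt.not_gt, overdamped_bracket_eq hlam hμ h,
        div_abs_mul_abs_div_eq hlam.ne' hμ.ne' (by linarith)]
  intro μ₁ μ₂ hμ₁ hμ₁' hμ₂ hμ₂' hlt
  rw [φ_eq μ₁ hμ₁ hμ₁', φ_eq μ₂ hμ₂ hμ₂']
  gcongr
end

section
/- Let H be a real symmetric positive-definite d×d matrix, μ > 0 and η ∈ (0, 1). Let A₁ be the real 2d×2d block matrix A₁ = [ ( (μ + ημ²/2)I − (η/2)H , (1 + ημ/2)H ) ; ( −(1 − ημ/2)I , (η/2)H ) ]. Then the set of complex eigenvalues of A₁ equals { (1/4)( μ(ημ + 2) + s·√( μ²(ημ + 2)² + 4η²κ² − 8κ(ημ + 2) ) ) : κ an eigenvalue of H, s ∈ {+1, −1} }, where √ denotes a complex square root. -/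
/-!
A real symmetric `H` is `U diag(κ) Uᵀ` with `U` orthogonal, so conjugating by `diag(U, U)` turns
every block of `A₁` (each of the form `p • 1 + q • H`) into a diagonal matrix. Interleaving the two
halves of the coordinates then makes `A₁` block diagonal with `2 × 2` blocks, one for each
eigenvalue `κ` of `H`; the characteristic polynomial is the product of their quadratics, whose
roots are given by the quadratic formula.
-/

open Matrix Polynomial

namespace Matrix

variable {R : Type*} [CommRing R] {n : Type*} [Fintype n] [DecidableEq n]

theorem charpoly_blockDiagonal {o : Type*} [Fintype o] [DecidableEq o] (M : o → Matrix n n R) :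
    (blockDiagonal M).charpoly = ∏ k, (M k).charpoly := by
  simp only [charpoly, ← det_blockDiagonal]
  congr 1
  ext ⟨i, k⟩ ⟨j, k'⟩
  by_cases hk : k = k' <;> by_cases hij : i = j <;> simp [blockDiagonal_apply, hk, hij]

theorem charpoly_fromBlocks_diagonal (α β γ δ : n → R) :
    (fromBlocks (diagonal α) (diagonal β) (diagonal γ) (diagonal δ)).charpoly =
      ∏ i, !![α i, β i; γ i, δ i].charpoly := by
  let e : Fin 2 × n ≃ n ⊕ n :=
    (Equiv.prodCongr finTwoEquiv (Equiv.refl n)).trans (Equiv.boolProdEquivSum n)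
  have h : (fromBlocks (diagonal α) (diagonal β) (diagonal γ) (diagonal δ)).submatrix e e =
      blockDiagonal fun i => !![α i, β i; γ i, δ i] := by
    ext ⟨x, i⟩ ⟨y, j⟩
    fin_cases x <;> fin_cases y <;> by_cases hij : i = j <;>
      simp [e, finTwoEquiv, Equiv.boolProdEquivSum, blockDiagonal_apply, hij]
  rw [← charpoly_blockDiagonal, ← h]
  exact (charpoly_reindex e.symm _).symm

theorem charpoly_fromBlocks_conj {U V : Matrix n n R} (hVU : V * U = 1)
    (A B C D : Matrix n n R) :
    (fromBlocks (U * A * V) (U * B * V) (U * C * V) (U * D * V)).charpoly =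
      (fromBlocks A B C D).charpoly := by
  have h : fromBlocks (U * A * V) (U * B * V) (U * C * V) (U * D * V) =
      fromBlocks U 0 0 U * fromBlocks A B C D * fromBlocks V 0 0 V := by
    simp [fromBlocks_multiply]
  rw [h, charpoly_mul_comm, ← mul_assoc]
  simp [fromBlocks_multiply, hVU]

variable {𝕜 : Type*} [RCLike 𝕜] {H : Matrix n n 𝕜}

theorem IsHermitian.charpoly_fromBlocks_smul_one_add_smul (hH : H.IsHermitian)
    (a a' b b' c c' d d' : 𝕜) :
    (Matrix.fromBlocks (a • 1 + a' • H) (b • 1 + b' • H) (c • 1 + c' • H)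
      (d • 1 + d' • H)).charpoly =
      ∏ i, !![a + a' * hH.eigenvalues i, b + b' * hH.eigenvalues i;
        c + c' * hH.eigenvalues i, d + d' * hH.eigenvalues i].charpoly := by
  have conj_diagonal (p q : 𝕜) :
      p • 1 + q • H = hH.eigenvectorUnitary * diagonal (fun i => p + q * hH.eigenvalues i) *
        star hH.eigenvectorUnitary := by
    conv_lhs => rw [hH.spectral_theorem]
    have hdiag : diagonal (fun i => p + q * (hH.eigenvalues i : 𝕜)) =
        p • 1 + q • diagonal (RCLike.ofReal ∘ hH.eigenvalues) := by
      ext i j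
      by_cases hij : i = j <;> simp [hij]
    simp [hdiag, mul_add, add_mul]
  rw [conj_diagonal, conj_diagonal, conj_diagonal, conj_diagonal,
    charpoly_fromBlocks_conj (by simp), charpoly_fromBlocks_diagonal]

end Matrix

theorem quadratic_eq_zero_iff_exists_sign {p q P D z : ℂ} (hP : P = 2 * p)
    (hD : D = 4 * (p ^ 2 - 4 * q)) :
    z ^ 2 - p * z + q = 0 ↔
      ∃ s : ℝ, (s = 1 ∨ s = -1) ∧ ∃ w : ℂ, w ^ 2 = D ∧ z = (1 / 4) * (P + s * w) := by
  subst hP hD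
  constructor
  · intro hz
    exact ⟨1, Or.inl rfl, 4 * z - 2 * p, by linear_combination 16 * hz, by push_cast; ring⟩
  · rintro ⟨s, hs, w, hw, rfl⟩
    have hs2 : (s : ℂ) ^ 2 = 1 := by rcases hs with rfl | rfl <;> norm_num
    linear_combination (w ^ 2 / 16) * hs2 + (1 / 16 : ℂ) * hw

theorem msgd_order2_sme_drift_eigenvalues_general
    {d : ℕ} (H : Matrix (Fin d) (Fin d) ℝ) (hH : H.PosDef)
    (μ η : ℝ) :
    {z : ℂ | (((Matrix.fromBlocks
        ((μ + η * μ ^ 2 / 2) • (1 : Matrix (Fin d) (Fin d) ℝ) - (η / 2) • H)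
        ((1 + η * μ / 2) • H)
        (-((1 - η * μ / 2) • (1 : Matrix (Fin d) (Fin d) ℝ)))
        ((η / 2) • H)).map (algebraMap ℝ ℂ)).charpoly).IsRoot z} =
    {z : ℂ | ∃ i : Fin d, ∃ s : ℝ, (s = 1 ∨ s = -1) ∧ ∃ w : ℂ,
      w ^ 2 = (μ : ℂ) ^ 2 * ((η : ℂ) * μ + 2) ^ 2
        + 4 * (η : ℂ) ^ 2 * (hH.isHermitian.eigenvalues i : ℂ) ^ 2
        - 8 * (hH.isHermitian.eigenvalues i : ℂ) * ((η : ℂ) * μ + 2) ∧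
      z = (1 / 4) * ((μ : ℂ) * ((η : ℂ) * μ + 2) + (s : ℂ) * w)} := by
  have affine_blocks : Matrix.fromBlocks
        ((μ + η * μ ^ 2 / 2) • (1 : Matrix (Fin d) (Fin d) ℝ) - (η / 2) • H)
        ((1 + η * μ / 2) • H)
        (-((1 - η * μ / 2) • (1 : Matrix (Fin d) (Fin d) ℝ)))
        ((η / 2) • H) =
      Matrix.fromBlocks ((μ + η * μ ^ 2 / 2) • 1 + (-(η / 2)) • H)
        ((0 : ℝ) • 1 + (1 + η * μ / 2) • H) ((-(1 - η * μ / 2)) • 1 + (0 : ℝ) • H)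
        ((0 : ℝ) • 1 + (η / 2) • H) := by
    congr 1 <;> module
  ext z
  simp only [Set.mem_ofPred_eq, charpoly_map, affine_blocks,
    hH.isHermitian.charpoly_fromBlocks_smul_one_add_smul, Polynomial.map_prod, IsRoot.def,
    eval_prod, Finset.prod_eq_zero_iff, Finset.mem_univ, true_and, charpoly_fin_two,
    trace_fin_two_of, det_fin_two_of, Polynomial.map_add, Polynomial.map_sub,
    Polynomial.map_mul, Polynomial.map_pow, map_X, map_C, eval_add, eval_sub, eval_mul, eval_pow,
    eval_X, eval_C, RCLike.ofReal_real_eq_id, id_eq]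
  simp only [Complex.coe_algebraMap]
  exact exists_congr fun i =>
    quadratic_eq_zero_iff_exists_sign (by push_cast; ring) (by push_cast; ring)

/-- Eigenvalues of the drift matrix `A₁` of the order-2 stochastic modified
equation for momentum SGD on the quadratic model: they are
`(1/4)(μ(ημ+2) ± √(μ²(ημ+2)² + 4η²κ² − 8κ(ημ+2)))` as `κ` ranges over the eigenvalues of `H`. -/
theorem msgd_order2_sme_drift_eigenvalues
    {d : ℕ} (H : Matrix (Fin d) (Fin d) ℝ) (hH : H.PosDef)
    (μ η : ℝ) (hμ : 0 < μ) (hη : 0 < η) (hη1 : η < 1) :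
    {z : ℂ | (((Matrix.fromBlocks
        ((μ + η * μ ^ 2 / 2) • (1 : Matrix (Fin d) (Fin d) ℝ) - (η / 2) • H)
        ((1 + η * μ / 2) • H)
        (-((1 - η * μ / 2) • (1 : Matrix (Fin d) (Fin d) ℝ)))
        ((η / 2) • H)).map (algebraMap ℝ ℂ)).charpoly).IsRoot z} =
    {z : ℂ | ∃ i : Fin d, ∃ s : ℝ, (s = 1 ∨ s = -1) ∧ ∃ w : ℂ,
      w ^ 2 = (μ : ℂ) ^ 2 * ((η : ℂ) * μ + 2) ^ 2
        + 4 * (η : ℂ) ^ 2 * (hH.isHermitian.eigenvalues i : ℂ) ^ 2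
        - 8 * (hH.isHermitian.eigenvalues i : ℂ) * ((η : ℂ) * μ + 2) ∧
      z = (1 / 4) * ((μ : ℂ) * ((η : ℂ) * μ + 2) + (s : ℂ) * w)} :=
  msgd_order2_sme_drift_eigenvalues_general H hH μ η
end

section
/- Let H be a real symmetric positive-definite d×d matrix, μ > 0 and η ∈ (0, 1). Let A₂ be the real 2d×2d block matrix A₂ = [ ( (μ + ημ²/2)I + (η/2)H , (1 + ημ/2)H ) ; ( −(1 − ημ/2)I , (η/2)H ) ]. Then the set of complex eigenvalues of A₂ equals { (1/4)( μ(ημ + 2) + 2ηκ + s·√(ημ + 2)·√( μ²(ημ + 2) + 4κ(ημ − 2) ) ) : κ an eigenvalue of H, s ∈ {+1, −1} }, where √ denotes a complex square root (and √(ημ+2) the positive real root). -/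
/-!
Diagonalise `H = U diag(κ) Uᵀ`. Conjugating by `diag(U, U)` turns each block `a • 1 + b • H` of
`A₂` into the diagonal matrix `diag(a + b κ)`, and a 2×2 block matrix with diagonal blocks is,
after regrouping coordinates, block diagonal with one 2×2 block per eigenvalue. So the
characteristic polynomial of `A₂` is a product of quadratics, one for each eigenvalue `κ`, and the
quadratic formula gives their roots. The discriminant, multiplied by 4, factors as
`(ημ + 2)(μ²(ημ + 2) + 4κ(ημ − 2))`.
-/

open Matrix Polynomial

namespace Matrix

variable {R n : Type*} [CommRing R] [Fintype n] [DecidableEq n]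

theorem det_fromBlocks_diagonal (a b c e : n → R) :
    (fromBlocks (diagonal a) (diagonal b) (diagonal c) (diagonal e)).det =
      ∏ i, (a i * e i - b i * c i) := by
  let σ : n ⊕ n ≃ Fin 2 × n :=
    (Equiv.boolProdEquivSum n).symm.trans (finTwoEquiv.symm.prodCongr (Equiv.refl n))
  have hblocks : fromBlocks (diagonal a) (diagonal b) (diagonal c) (diagonal e) =
      (blockDiagonal fun i => !![a i, b i; c i, e i]).submatrix σ σ := by
    ext (i | i) (j | j) <;> by_cases h : i = j <;> simp [σ, blockDiagonal_apply, h, finTwoEquiv]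
  rw [hblocks, det_submatrix_equiv_self, det_blockDiagonal]
  simp [det_fin_two_of]

theorem charpoly_fromBlocks_diagonal_s15 (a b c e : n → R) :
    (fromBlocks (diagonal a) (diagonal b) (diagonal c) (diagonal e)).charpoly =
      ∏ i, ((X - C (a i)) * (X - C (e i)) - C (b i * c i)) := by
  have : charmatrix (fromBlocks (diagonal a) (diagonal b) (diagonal c) (diagonal e)) =
      fromBlocks (diagonal fun i => X - C (a i)) (diagonal fun i => -C (b i))
        (diagonal fun i => -C (c i)) (diagonal fun i => X - C (e i)) := by
    ext (i | i) (j | j) <;> by_cases h : i = j <;> simp [h]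
  rw [charpoly, this, det_fromBlocks_diagonal]
  simp

variable {U V : Matrix n n R}

theorem charpoly_conj (hVU : V * U = 1) (N : Matrix n n R) :
    (U * N * V).charpoly = N.charpoly := by
  rw [charpoly_mul_comm, ← mul_assoc, hVU, one_mul]

theorem smul_one_add_smul_conj (hUV : U * V = 1) (a b : R) (D : Matrix n n R) :
    a • 1 + b • (U * D * V) = U * (a • 1 + b • D) * V := by
  simp only [Matrix.mul_add, Matrix.add_mul, Matrix.mul_smul, Matrix.smul_mul, Matrix.mul_one, hUV]

theorem charpoly_fromBlocks_smul_one_add_smul {H : Matrix n n R} {κ : n → R}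
    (hH : H = U * diagonal κ * V) (hUV : U * V = 1) (a₁ b₁ a₂ b₂ a₃ b₃ a₄ b₄ : R) :
    (fromBlocks (a₁ • 1 + b₁ • H) (a₂ • 1 + b₂ • H) (a₃ • 1 + b₃ • H)
        (a₄ • 1 + b₄ • H)).charpoly =
      ∏ i, ((X - C (a₁ + b₁ * κ i)) * (X - C (a₄ + b₄ * κ i))
        - C ((a₂ + b₂ * κ i) * (a₃ + b₃ * κ i))) := by
  have hdiag (a b : R) : a • 1 + b • H = U * diagonal (fun i => a + b * κ i) * V := by
    rw [hH, smul_one_add_smul_conj hUV]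
    congr 2
    ext i j
    by_cases h : i = j <;> simp [h]
  have hVU : fromBlocks V 0 0 V * fromBlocks U 0 0 U = 1 := by
    simp [fromBlocks_multiply, mul_eq_one_comm.mp hUV]
  simp only [hdiag]
  rw [← charpoly_fromBlocks_diagonal_s15]
  convert charpoly_conj hVU _ using 2
  simp [fromBlocks_multiply]

end Matrix

theorem sub_mul_sub_sub_eq_zero_iff {K : Type*} [Field K] [NeZero (2 : K)] (p q r z : K) :
    (z - p) * (z - q) - r = 0 ↔ ∃ w, w ^ 2 = (p - q) ^ 2 + 4 * r ∧ z = (p + q + w) / 2 := by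
  constructor
  · intro hz
    refine ⟨2 * z - p - q, by linear_combination 4 * hz, by field_simp; ring⟩
  · rintro ⟨w, hw, rfl⟩
    field_simp
    linear_combination hw

theorem drift_quadratic_eq_zero_iff {μ η : ℝ} (h : 0 < η * μ + 2) (κ : ℝ) (z : ℂ) :
    (z - (μ + η * μ ^ 2 / 2 + η / 2 * κ)) * (z - η / 2 * κ)
        - (1 + η * μ / 2) * κ * (-(1 - η * μ / 2)) = 0 ↔
      ∃ s : ℝ, (s = 1 ∨ s = -1) ∧ ∃ w : ℂ,
        w ^ 2 = (μ : ℂ) ^ 2 * ((η : ℂ) * μ + 2) + 4 * (κ : ℂ) * ((η : ℂ) * μ - 2) ∧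
        z = (1 / 4) * ((μ : ℂ) * ((η : ℂ) * μ + 2) + 2 * (η : ℂ) * κ
          + (s : ℂ) * (Real.sqrt (η * μ + 2) : ℂ) * w) := by
  have hr : ((Real.sqrt (η * μ + 2) : ℝ) : ℂ) ^ 2 = η * μ + 2 := by
    rw [← Complex.ofReal_pow, Real.sq_sqrt h.le]
    push_cast; ring
  have hr0 : ((Real.sqrt (η * μ + 2) : ℝ) : ℂ) ≠ 0 := by
    rw [Complex.ofReal_ne_zero]; positivity
  set r : ℂ := ((Real.sqrt (η * μ + 2) : ℝ) : ℂ)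
  rw [sub_mul_sub_sub_eq_zero_iff]
  constructor
  · rintro ⟨w, hw, rfl⟩
    refine ⟨1, Or.inl rfl, 2 * w / r, ?_, ?_⟩
    · field_simp
      linear_combination 4 * hw
        - ((μ : ℂ) ^ 2 * ((η : ℂ) * μ + 2) + 4 * (κ : ℂ) * ((η : ℂ) * μ - 2)) * hr
    · field_simp
      push_cast
      ring
  · rintro ⟨s, hs, w, hw, rfl⟩
    have hs2 : (s : ℂ) ^ 2 = 1 := by rcases hs with rfl | rfl <;> norm_num
    refine ⟨s * r * w / 2, ?_, by ring⟩
    linear_combination (r ^ 2 * w ^ 2 / 4) * hs2 + (r ^ 2 / 4) * hw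
      + (((μ : ℂ) ^ 2 * ((η : ℂ) * μ + 2) + 4 * (κ : ℂ) * ((η : ℂ) * μ - 2)) / 4) * hr

theorem snag_order2_sme_drift_eigenvalues_general
    {d : ℕ} (H : Matrix (Fin d) (Fin d) ℝ) (hH : H.PosDef)
    (μ η : ℝ) (hμ : 0 < μ) (hη : 0 < η) :
    {z : ℂ | (((Matrix.fromBlocks
        ((μ + η * μ ^ 2 / 2) • (1 : Matrix (Fin d) (Fin d) ℝ) + (η / 2) • H)
        ((1 + η * μ / 2) • H)
        (-((1 - η * μ / 2) • (1 : Matrix (Fin d) (Fin d) ℝ)))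
        ((η / 2) • H)).map (algebraMap ℝ ℂ)).charpoly).IsRoot z} =
    {z : ℂ | ∃ i : Fin d, ∃ s : ℝ, (s = 1 ∨ s = -1) ∧ ∃ w : ℂ,
      w ^ 2 = (μ : ℂ) ^ 2 * ((η : ℂ) * μ + 2)
        + 4 * (hH.isHermitian.eigenvalues i : ℂ) * ((η : ℂ) * μ - 2) ∧
      z = (1 / 4) * ((μ : ℂ) * ((η : ℂ) * μ + 2)
        + 2 * (η : ℂ) * (hH.isHermitian.eigenvalues i : ℂ)
        + (s : ℂ) * (Real.sqrt (η * μ + 2) : ℂ) * w)} := by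
  have hspec : H = (hH.isHermitian.eigenvectorUnitary : Matrix (Fin d) (Fin d) ℝ) *
      diagonal hH.isHermitian.eigenvalues *
        star (hH.isHermitian.eigenvectorUnitary : Matrix (Fin d) (Fin d) ℝ) := by
    simpa using hH.isHermitian.spectral_theorem
  have hblocks : Matrix.fromBlocks
        ((μ + η * μ ^ 2 / 2) • (1 : Matrix (Fin d) (Fin d) ℝ) + (η / 2) • H)
        ((1 + η * μ / 2) • H)
        (-((1 - η * μ / 2) • (1 : Matrix (Fin d) (Fin d) ℝ)))
        ((η / 2) • H) = Matrix.fromBlocks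
        ((μ + η * μ ^ 2 / 2) • 1 + (η / 2) • H) ((0 : ℝ) • 1 + (1 + η * μ / 2) • H)
        ((-(1 - η * μ / 2)) • 1 + (0 : ℝ) • H) ((0 : ℝ) • 1 + (η / 2) • H) := by
    simp only [zero_smul, zero_add, add_zero, neg_smul]
  ext z
  rw [Set.mem_ofPred_eq, hblocks, charpoly_map,
    charpoly_fromBlocks_smul_one_add_smul hspec (Unitary.mul_star_self_of_mem (SetLike.coe_mem _))]
  simp only [IsRoot, Polynomial.map_prod, eval_prod, Finset.prod_eq_zero_iff, Finset.mem_univ,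
    true_and, Set.mem_ofPred_eq]
  refine exists_congr fun i => ?_
  refine Iff.trans ?_ (drift_quadratic_eq_zero_iff (by positivity) _ z)
  simp

/-- Eigenvalues of the drift matrix `A₂` of the order-2 stochastic modified
equation for the stochastic Nesterov accelerated gradient method on the quadratic model:
they are `(1/4)(μ(ημ+2) + 2ηκ ± √(ημ+2)·√(μ²(ημ+2) + 4κ(ημ−2)))` as `κ` ranges over the
eigenvalues of `H`. -/
theorem snag_order2_sme_drift_eigenvalues
    {d : ℕ} (H : Matrix (Fin d) (Fin d) ℝ) (hH : H.PosDef)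
    (μ η : ℝ) (hμ : 0 < μ) (hη : 0 < η) (hη1 : η < 1) :
    {z : ℂ | (((Matrix.fromBlocks
        ((μ + η * μ ^ 2 / 2) • (1 : Matrix (Fin d) (Fin d) ℝ) + (η / 2) • H)
        ((1 + η * μ / 2) • H)
        (-((1 - η * μ / 2) • (1 : Matrix (Fin d) (Fin d) ℝ)))
        ((η / 2) • H)).map (algebraMap ℝ ℂ)).charpoly).IsRoot z} =
    {z : ℂ | ∃ i : Fin d, ∃ s : ℝ, (s = 1 ∨ s = -1) ∧ ∃ w : ℂ,
      w ^ 2 = (μ : ℂ) ^ 2 * ((η : ℂ) * μ + 2)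
        + 4 * (hH.isHermitian.eigenvalues i : ℂ) * ((η : ℂ) * μ - 2) ∧
      z = (1 / 4) * ((μ : ℂ) * ((η : ℂ) * μ + 2)
        + 2 * (η : ℂ) * (hH.isHermitian.eigenvalues i : ℂ)
        + (s : ℂ) * (Real.sqrt (η * μ + 2) : ℂ) * w)} :=
  snag_order2_sme_drift_eigenvalues_general H hH μ η hμ hη
end

section
/- Define φ : ℝ^d → ℝ^{d×d} by φ(u) := u u^T / |u| for u ≠ 0 and φ(0) := 0. Then: (i) for every u ∈ ℝ^d, φ(u) is the (unique) positive semidefinite square root of the matrix u u^T, i.e. φ(u) is symmetric positive semidefinite and φ(u)² = u u^T; and (ii) φ is Lipschitz continuous: there exists a constant L′ > 0 such that ‖φ(u) − φ(v)‖ ≤ L′ |u − v| for all u, v ∈ ℝ^d, where ‖·‖ is the Frobenius norm. -/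
/-!
Writing `û = u / |u|` (and `û = 0` for `u = 0`), the map is `φ(u) = u ûᵀ`. Since `û ⬝ u = |u|` and
`|u| û = u`, we get `φ(u)² = u (û ⬝ u) ûᵀ = u uᵀ`. For the Lipschitz bound split
`φ(u) - φ(v) = (u - v) ûᵀ + v (û - v̂)ᵀ`; the Frobenius norm of `x yᵀ` is `|x| |y|`, and
`|v| |û - v̂| = |(|v| - |u|) û + (u - v)| ≤ 2 |u - v|`, giving the constant `3`.
-/

open Matrix

open NormedSpace

section Normalize

variable {V : Type*} [NormedAddCommGroup V] [NormedSpace ℝ V]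

lemma norm_normalize_le (x : V) : ‖normalize x‖ ≤ 1 := by
  rcases eq_or_ne x 0 with rfl | hx
  · simp [normalize_zero_eq_zero]
  · exact (norm_normalize hx).le

lemma norm_mul_norm_normalize_sub_normalize_le (u v : V) :
    ‖v‖ * ‖normalize u - normalize v‖ ≤ 2 * ‖u - v‖ :=
  calc ‖v‖ * ‖normalize u - normalize v‖
      = ‖(‖v‖ - ‖u‖) • normalize u + (u - v)‖ := by
        rw [← norm_norm v, ← norm_smul, norm_norm, smul_sub, norm_smul_normalize, sub_smul,
          norm_smul_normalize]
        abel_nf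
    _ ≤ |‖v‖ - ‖u‖| * 1 + ‖u - v‖ := by
        grw [norm_add_le, norm_smul, Real.norm_eq_abs, norm_normalize_le]
    _ ≤ 2 * ‖u - v‖ := by
        linarith [abs_norm_sub_norm_le v u, norm_sub_rev v u]

end Normalize

section RankOneSqrt

variable {n : Type*} [Fintype n]

noncomputable def rankOneSqrt (u : EuclideanSpace ℝ n) : Matrix n n ℝ :=
  vecMulVec u.ofLp (normalize u).ofLp

lemma rankOneSqrt_eq_inv_norm_smul (u : EuclideanSpace ℝ n) :
    rankOneSqrt u = ‖u‖⁻¹ • vecMulVec u.ofLp u.ofLp := by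
  rw [rankOneSqrt, NormedSpace.normalize, WithLp.ofLp_smul, vecMulVec_smul]

lemma rankOneSqrt_zero : rankOneSqrt (0 : EuclideanSpace ℝ n) = 0 := by
  simp [rankOneSqrt_eq_inv_norm_smul]

lemma rankOneSqrt_posSemidef (u : EuclideanSpace ℝ n) : (rankOneSqrt u).PosSemidef := by
  rw [rankOneSqrt_eq_inv_norm_smul]
  simpa using (posSemidef_vecMulVec_self_star u.ofLp).smul (inv_nonneg.2 (norm_nonneg u))

lemma rankOneSqrt_mul_self (u : EuclideanSpace ℝ n) :
    rankOneSqrt u * rankOneSqrt u = vecMulVec u.ofLp u.ofLp := by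
  have hdot : u.ofLp ⬝ᵥ u.ofLp = ‖u‖ ^ 2 := by
    rw [← real_inner_self_eq_norm_sq, EuclideanSpace.inner_eq_star_dotProduct, star_trivial]
  have hnormalize_dot : (normalize u).ofLp ⬝ᵥ u.ofLp = ‖u‖ := by
    rw [NormedSpace.normalize, WithLp.ofLp_smul, smul_dotProduct, hdot, smul_eq_mul, sq,
      ← mul_assoc, inv_mul_mul_self]
  rw [rankOneSqrt, vecMulVec_mul_vecMulVec, hnormalize_dot, ← WithLp.ofLp_smul,
    norm_smul_normalize]

end RankOneSqrt

section Frobenius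

attribute [local instance] Matrix.frobeniusNormedAddCommGroup

lemma frobNorm_eq_frobenius_norm {n : Type*} [Fintype n] (M : Matrix n n ℝ) :
    frobNorm M = ‖M‖ := by
  rw [frobNorm, frobenius_norm_def, Real.sqrt_eq_rpow]
  simp

lemma frobenius_norm_vecMulVec_le {𝕜 m n : Type*} [RCLike 𝕜] [Fintype m] [Fintype n]
    (x : EuclideanSpace 𝕜 m) (y : EuclideanSpace 𝕜 n) :
    ‖vecMulVec x.ofLp y.ofLp‖ ≤ ‖x‖ * ‖y‖ := by
  rw [vecMulVec_eq Unit]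
  exact (frobenius_norm_mul _ _).trans_eq (by simp)

lemma frobNorm_rankOneSqrt_sub_le {n : Type*} [Fintype n] (u v : EuclideanSpace ℝ n) :
    frobNorm (rankOneSqrt u - rankOneSqrt v) ≤ 3 * ‖u - v‖ := by
  have hsplit : rankOneSqrt u - rankOneSqrt v =
      vecMulVec (u - v).ofLp (normalize u).ofLp
        + vecMulVec v.ofLp (normalize u - normalize v).ofLp := by
    simp only [rankOneSqrt, WithLp.ofLp_sub, sub_vecMulVec, vecMulVec_sub]
    abel
  rw [frobNorm_eq_frobenius_norm, hsplit]
  calc _ ≤ ‖u - v‖ * ‖normalize u‖ + ‖v‖ * ‖normalize u - normalize v‖ :=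
        norm_add_le_of_le (frobenius_norm_vecMulVec_le _ _) (frobenius_norm_vecMulVec_le _ _)
    _ ≤ ‖u - v‖ * 1 + 2 * ‖u - v‖ := by
        grw [norm_normalize_le, norm_mul_norm_normalize_sub_normalize_le]
    _ = 3 * ‖u - v‖ := by ring

end Frobenius

/-- The map `φ(u) = u uᵀ / |u|` (with `φ(0) = 0`) is, for each `u`, the
positive semidefinite square root of `u uᵀ`, and `φ` is Lipschitz in the Frobenius norm. -/
theorem rank_one_sqrt_lipschitz
    {d : ℕ} (φ : EuclideanSpace ℝ (Fin d) → Matrix (Fin d) (Fin d) ℝ)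
    (hφ0 : φ 0 = 0)
    (hφ : ∀ u : EuclideanSpace ℝ (Fin d), u ≠ 0 →
      φ u = ‖u‖⁻¹ • Matrix.of (fun i j => u i * u j)) :
    -- (i) `φ u` is the positive semidefinite square root of `u uᵀ`
    (∀ u : EuclideanSpace ℝ (Fin d),
      (φ u).PosSemidef ∧ φ u * φ u = Matrix.of (fun i j => u i * u j)) ∧
    -- (ii) `φ` is Lipschitz
    (∃ L' : ℝ, 0 < L' ∧ ∀ u v : EuclideanSpace ℝ (Fin d),
      frobNorm (φ u - φ v) ≤ L' * ‖u - v‖) := by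
  obtain rfl : φ = rankOneSqrt := by
    funext u
    rcases eq_or_ne u 0 with rfl | hu
    · rw [hφ0, rankOneSqrt_zero]
    · rw [hφ u hu, rankOneSqrt_eq_inv_norm_smul]
      rfl
  exact ⟨fun u => ⟨rankOneSqrt_posSemidef u, rankOneSqrt_mul_self u⟩,
    3, by norm_num, frobNorm_rankOneSqrt_sub_le⟩
end
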